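/- arXiv:1701.00275 — 7 statements merged into one kernel-verified Lean document; each statement's English description precedes it below -/
import Mathlib

section
/- Let K be a field and n ≥ 1 a natural number. In the planar Cremona group Cr₂(K), let s be the K-algebra automorphism of L with s(x) = x + 1, s(y) = y, and let a be the K-algebra automorphism with a(x) = x, a(y) = y + xⁿ. Then the subgroup Γₙ of Cr₂(K) generated by s and a is nilpotent of nilpotency class at most n + 1. -/
open MvPolynomial

/-- The rational function field `K(X,Y)`, realized as the fraction field of the polynomial
ring in two variables. Its group of `K`-algebra automorphisms is the planar Cremona
group `CremonaField K ≃ₐ[K] CremonaField K(K)`. -/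
noncomputable abbrev CremonaField (K : Type*) [Field K] : Type _ :=
  FractionRing (MvPolynomial (Fin 2) K)

/-- The image of the first variable in `K(X,Y)`. -/
noncomputable def genX (K : Type*) [Field K] : CremonaField K :=
  algebraMap (MvPolynomial (Fin 2) K) (CremonaField K) (X 0)

/-- The image of the second variable in `K(X,Y)`. -/
noncomputable def genY (K : Type*) [Field K] : CremonaField K :=
  algebraMap (MvPolynomial (Fin 2) K) (CremonaField K) (X 1)

/-!
The automorphisms `x ↦ x + c`, `y ↦ y + p(x)` form a group in which the commutator of
`(c, p)` and `(d, q)` is `(0, (q(x + c) - q) - (p(x + d) - p))`. Since `p(x + d) - p(x)` has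
smaller degree than `p`, commutators fix `x`, and each further commutator lowers the degree bound
on the polynomial part by one. Both generators have polynomial part of degree at most `n`, so
commutators of weight `n + 1` have polynomial part `0` and are trivial.
-/

namespace Polynomial

theorem taylor_sub_self_mem_degreeLT {R : Type*} [Ring R] (r : R) {p : R[X]} {k : ℕ}
    (hp : p ∈ R[X]_k) : taylor r p - p ∈ R[X]_(k - 1) := by
  rcases eq_or_ne p 0 with rfl | hp0
  · simp
  rw [mem_degreeLT, degree_eq_natDegree hp0, Nat.cast_lt] at hp
  rw [mem_degreeLT]
  calc (taylor r p - p).degree < (taylor r p).degree :=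
        degree_sub_lt_left (degree_taylor p r) (by rwa [Ne, taylor_eq_zero])
          (leadingCoeff_taylor r p)
    _ = p.natDegree := by rw [degree_taylor, degree_eq_natDegree hp0]
    _ ≤ (k - 1 : ℕ) := by exact_mod_cast Nat.le_sub_one_of_lt hp

end Polynomial

theorem Subgroup.nilpotencyClass_le_of_lowerCentralSeries_eq_bot {G : Type*} [Group G]
    {S : Subgroup G} [Group.IsNilpotent S] {n : ℕ} (h : S.lowerCentralSeries n = ⊥) :
    Group.nilpotencyClass S ≤ n := by
  rwa [← lowerCentralSeries_eq_bot_iff_nilpotencyClass_le, ← map_subtype_inj, map_bot,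
    top_subtype_lowerCentralSeries]

open Polynomial
open scoped commutatorElement

section Cremona

variable {K : Type*} [Field K]

theorem CremonaField.algEquiv_ext {σ τ : CremonaField K ≃ₐ[K] CremonaField K}
    (hx : σ (genX K) = τ (genX K)) (hy : σ (genY K) = τ (genY K)) : σ = τ := by
  refine AlgEquiv.coe_toAlgHom_injective <|
    IsLocalization.algHom_ext (nonZeroDivisors (MvPolynomial (Fin 2) K)) <|
      MvPolynomial.algHom_ext fun i => ?_
  fin_cases i
  exacts [hx, hy]

def IsTriangular (σ : CremonaField K ≃ₐ[K] CremonaField K) (c : K) (p : K[X]) : Prop :=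
  σ (genX K) = genX K + algebraMap K (CremonaField K) c ∧
    σ (genY K) = genY K + aeval (genX K) p

namespace IsTriangular

variable {σ τ : CremonaField K ≃ₐ[K] CremonaField K} {c d : K} {p q : K[X]}

theorem one : IsTriangular (1 : CremonaField K ≃ₐ[K] CremonaField K) 0 0 := by
  constructor <;> simp

theorem eq_one (h : IsTriangular σ 0 0) : σ = 1 :=
  CremonaField.algEquiv_ext (by simpa using h.1) (by simpa using h.2)

theorem mul (hσ : IsTriangular σ c p) (hτ : IsTriangular τ d q) :
    IsTriangular (σ * τ) (c + d) (p + taylor c q) := by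
  constructor
  · rw [AlgEquiv.mul_apply, hτ.1, map_add, hσ.1, AlgEquiv.commutes, map_add, add_assoc]
  · rw [AlgEquiv.mul_apply, hτ.2, map_add, hσ.2, ← aeval_algHom_apply, hσ.1, map_add,
      taylor_apply, aeval_comp, add_assoc]
    simp

theorem inv (h : IsTriangular σ c p) : IsTriangular σ⁻¹ (-c) (-taylor (-c) p) := by
  constructor <;> apply σ.injective <;> rw [AlgEquiv.aut_inv, AlgEquiv.apply_symm_apply, map_add]
  · rw [h.1, AlgEquiv.commutes, map_neg, add_neg_cancel_right]
  · rw [h.2, map_neg, map_neg, ← aeval_algHom_apply, h.1, taylor_apply, aeval_comp]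
    simp

theorem commutatorElement (hσ : IsTriangular σ c p) (hτ : IsTriangular τ d q) :
    IsTriangular ⁅σ, τ⁆ 0 ((taylor c q - q) - (taylor d p - p)) := by
  have h := (hσ.mul hτ).mul (hτ.mul hσ).inv
  rw [show σ * τ * (τ * σ)⁻¹ = ⁅σ, τ⁆ by group, map_neg, taylor_taylor] at h
  rwa [show c + d + -(d + c) = 0 by abel, taylor_zero, ← sub_eq_add_neg,
    show p + taylor c q - (q + taylor d p) = taylor c q - q - (taylor d p - p) by abel] at h

end IsTriangular

variable (K) in
def triangularSubgroup (m : ℕ) : Subgroup (CremonaField K ≃ₐ[K] CremonaField K) where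
  carrier := {σ | ∃ c, ∃ p ∈ K[X]_m, IsTriangular σ c p}
  one_mem' := ⟨0, 0, zero_mem _, .one⟩
  mul_mem' := by
    rintro σ τ ⟨c, p, hp, hσ⟩ ⟨d, q, hq, hτ⟩
    exact ⟨c + d, _, add_mem hp (taylor_mem_degreeLT.mpr hq), hσ.mul hτ⟩
  inv_mem' := by
    rintro σ ⟨c, p, hp, hσ⟩
    exact ⟨-c, _, neg_mem (taylor_mem_degreeLT.mpr hp), hσ.inv⟩

variable (K) in
def fiberTranslationSubgroup (m : ℕ) : Subgroup (CremonaField K ≃ₐ[K] CremonaField K) where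
  carrier := {σ | ∃ p ∈ K[X]_m, IsTriangular σ 0 p}
  one_mem' := ⟨0, zero_mem _, .one⟩
  mul_mem' := by
    rintro σ τ ⟨p, hp, hσ⟩ ⟨q, hq, hτ⟩
    exact ⟨p + q, add_mem hp hq, by simpa using hσ.mul hτ⟩
  inv_mem' := by
    rintro σ ⟨p, hp, hσ⟩
    exact ⟨-p, neg_mem hp, by simpa using hσ.inv⟩

theorem fiberTranslationSubgroup_zero : fiberTranslationSubgroup K 0 = ⊥ := by
  refine eq_bot_iff.mpr fun σ ⟨p, hp, hσ⟩ => ?_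
  obtain rfl : p = 0 := by simpa [mem_degreeLT] using hp
  exact hσ.eq_one

theorem commutator_triangularSubgroup_le (m : ℕ) :
    ⁅triangularSubgroup K m, triangularSubgroup K m⁆ ≤
      fiberTranslationSubgroup K (m - 1) := by
  rw [Subgroup.commutator_le]
  rintro σ ⟨c, p, hp, hσ⟩ τ ⟨d, q, hq, hτ⟩
  exact ⟨_, sub_mem (taylor_sub_self_mem_degreeLT c hq) (taylor_sub_self_mem_degreeLT d hp),
    hσ.commutatorElement hτ⟩

theorem commutator_fiberTranslationSubgroup_triangularSubgroup_le (k m : ℕ) :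
    ⁅fiberTranslationSubgroup K k, triangularSubgroup K m⁆ ≤
      fiberTranslationSubgroup K (k - 1) := by
  rw [Subgroup.commutator_le]
  rintro σ ⟨p, hp, hσ⟩ τ ⟨d, q, -, hτ⟩
  refine ⟨_, ?_, hσ.commutatorElement hτ⟩
  simpa using neg_mem (taylor_sub_self_mem_degreeLT d hp)

theorem lowerCentralSeries_triangularSubgroup_le (m j : ℕ) :
    (triangularSubgroup K m).lowerCentralSeries (j + 1) ≤
      fiberTranslationSubgroup K (m - 1 - j) := by
  induction j with
  | zero => exact commutator_triangularSubgroup_le m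
  | succ j ih =>
    rw [Subgroup.lowerCentralSeries_succ, Nat.sub_succ]
    exact (Subgroup.commutator_mono ih le_rfl).trans
      (commutator_fiberTranslationSubgroup_triangularSubgroup_le _ m)

theorem lowerCentralSeries_triangularSubgroup_eq_bot (n : ℕ) :
    (triangularSubgroup K (n + 1)).lowerCentralSeries (n + 1) = ⊥ := by
  simpa [fiberTranslationSubgroup_zero] using lowerCentralSeries_triangularSubgroup_le (n + 1) n

end Cremona

theorem statement0_general (K : Type*) [Field K] (n : ℕ)
    (s a : CremonaField K ≃ₐ[K] CremonaField K)
    (hsx : s (genX K) = genX K + 1) (hsy : s (genY K) = genY K)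
    (hax : a (genX K) = genX K) (hay : a (genY K) = genY K + genX K ^ n) :
    ∃ hN : Group.IsNilpotent (Subgroup.closure {s, a} : Subgroup (CremonaField K ≃ₐ[K] CremonaField K)),
      @Group.nilpotencyClass (Subgroup.closure {s, a} : Subgroup (CremonaField K ≃ₐ[K] CremonaField K)) _ ≤ n + 1 := by
  have hs : s ∈ triangularSubgroup K (n + 1) :=
    ⟨1, 0, zero_mem _, by simpa using hsx, by simpa using hsy⟩
  have ha : a ∈ triangularSubgroup K (n + 1) :=
    ⟨0, Polynomial.X ^ n, by rw [mem_degreeLT, degree_X_pow]; exact_mod_cast n.lt_succ_self,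
      by simpa using hax, by simpa using hay⟩
  have hΓ : Subgroup.closure {s, a} ≤ triangularSubgroup K (n + 1) := by
    rw [Subgroup.closure_le, Set.insert_subset_iff, Set.singleton_subset_iff]
    exact ⟨hs, ha⟩
  have hbot : (Subgroup.closure {s, a}).lowerCentralSeries (n + 1) = ⊥ :=
    eq_bot_iff.mpr <| (Subgroup.lowerCentralSeries_mono _ hΓ).trans
      (lowerCentralSeries_triangularSubgroup_eq_bot n).le
  have hnil := Subgroup.isNilpotent_of_lowerCentralSeries_eq_bot hbot
  exact ⟨hnil, Subgroup.nilpotencyClass_le_of_lowerCentralSeries_eq_bot hbot⟩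

theorem statement0 (K : Type*) [Field K] (n : ℕ) (hn : 1 ≤ n)
    (s a : CremonaField K ≃ₐ[K] CremonaField K)
    (hsx : s (genX K) = genX K + 1) (hsy : s (genY K) = genY K)
    (hax : a (genX K) = genX K) (hay : a (genY K) = genY K + genX K ^ n) :
    ∃ hN : Group.IsNilpotent (Subgroup.closure {s, a} : Subgroup (CremonaField K ≃ₐ[K] CremonaField K)),
      @Group.nilpotencyClass (Subgroup.closure {s, a} : Subgroup (CremonaField K ≃ₐ[K] CremonaField K)) _ ≤ n + 1 :=
  statement0_general K n s a hsx hsy hax hay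
end

section
/- Let K be a field and n ≥ 1. In the planar Cremona group Cr₂(K), let s be the automorphism with s(x) = x + 1, s(y) = y, and for each polynomial P ∈ K[X] of degree at most n let α_P be the automorphism with α_P(x) = x, α_P(y) = y + P(x). Then the subgroup Rₙ of Cr₂(K) generated by s together with all α_P with deg P ≤ n is nilpotent of nilpotency class at most n + 1. -/
open MvPolynomial

/-!
Write `(c, P)` for the automorphism `x ↦ x + c, y ↦ y + P(x)`. These compose by
`(b, Q) (c, P) = (b + c, Q + P(· + b))`, so the commutator of `(b, Q)` and `(c, P)` is
`(0, (Q - Q(· + c)) + (P(· + b) - P))`. A translation of the variable preserves the leading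
coefficient, so every commutator with an element of the group strictly lowers the degree of the
`y`-shift. The generators have shifts of degree `≤ n`, so the lower central series becomes trivial
after `n + 1` steps.
-/

open Polynomial

open scoped commutatorElement

namespace Cremona

variable {K : Type*} [Field K]

theorem algEquiv_ext {σ τ : CremonaField K ≃ₐ[K] CremonaField K}
    (hx : σ (genX K) = τ (genX K)) (hy : σ (genY K) = τ (genY K)) : σ = τ :=
  AlgEquiv.coe_toAlgHom_injective <|
    IsLocalization.algHom_ext (nonZeroDivisors (MvPolynomial (Fin 2) K)) <|
      MvPolynomial.algHom_ext fun i => by fin_cases i <;> assumption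

theorem taylor_sub_mem_degreeLT {R : Type*} [Ring R] (c : R) {Q : R[X]} {d : ℕ}
    (hQ : Q ∈ degreeLE R d) : taylor c Q - Q ∈ degreeLT R d := by
  rcases eq_or_ne Q 0 with rfl | hQ0
  · simp
  · exact mem_degreeLT.mpr <| (degree_sub_lt_right (degree_taylor Q c) hQ0
      (leadingCoeff_taylor c Q)).trans_le (mem_degreeLE.mp hQ)

def IsTriangular (c : K) (P : K[X]) (σ : CremonaField K ≃ₐ[K] CremonaField K) : Prop :=
  σ (genX K) = genX K + algebraMap K (CremonaField K) c ∧
    σ (genY K) = genY K + aeval (genX K) P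

namespace IsTriangular

variable {b c : K} {P Q : K[X]} {σ τ : CremonaField K ≃ₐ[K] CremonaField K}

theorem apply_aeval_genX (hσ : IsTriangular c P σ) (R : K[X]) :
    σ (aeval (genX K) R) = aeval (genX K) (taylor c R) := by
  rw [taylor_apply, aeval_comp, map_add, Polynomial.aeval_X, Polynomial.aeval_C, ← hσ.1]
  exact (aeval_algHom_apply σ (genX K) R).symm

theorem eq_one (hσ : IsTriangular 0 0 σ) : σ = 1 :=
  algEquiv_ext (by simpa using hσ.1) (by simpa using hσ.2)

theorem mul (hσ : IsTriangular b Q σ) (hτ : IsTriangular c P τ) :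
    IsTriangular (b + c) (Q + taylor b P) (σ * τ) := by
  constructor
  · rw [AlgEquiv.mul_apply, hτ.1, map_add, hσ.1, AlgEquiv.commutes, map_add]
    ring
  · rw [AlgEquiv.mul_apply, hτ.2, map_add, hσ.2, hσ.apply_aeval_genX, map_add]
    ring

theorem inv (hσ : IsTriangular c P σ) : IsTriangular (-c) (-taylor (-c) P) σ⁻¹ := by
  have eq_inv_apply {z w : CremonaField K} (h : σ w = z) : σ⁻¹ z = w := by
    rw [← h, ← AlgEquiv.mul_apply, inv_mul_cancel, AlgEquiv.one_apply]
  constructor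
  · refine eq_inv_apply ?_
    rw [map_add, hσ.1, AlgEquiv.commutes, map_neg]
    ring
  · refine eq_inv_apply ?_
    rw [map_add, hσ.2, hσ.apply_aeval_genX, map_neg, map_neg, taylor_taylor, add_neg_cancel,
      taylor_zero]
    ring

theorem commutatorElement (hσ : IsTriangular b Q σ) (hτ : IsTriangular c P τ) :
    IsTriangular 0 ((Q - taylor c Q) + (taylor b P - P)) ⁅σ, τ⁆ := by
  have h := ((hσ.mul hτ).mul hσ.inv).mul hτ.inv
  rw [map_neg, map_neg, taylor_taylor, taylor_taylor, show b + c + -b = c by ring,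
    add_neg_cancel, taylor_zero] at h
  rwa [commutatorElement_def, show Q - taylor c Q + (taylor b P - P) =
    Q + taylor b P + -taylor c Q + -P by ring]

end IsTriangular

variable (K)

noncomputable def triangularSubgroup (d : ℕ) : Subgroup (CremonaField K ≃ₐ[K] CremonaField K) where
  carrier := {σ | ∃ c, ∃ P ∈ degreeLE K d, IsTriangular c P σ}
  one_mem' := ⟨0, 0, zero_mem _, by constructor <;> simp⟩
  mul_mem' := by
    rintro σ τ ⟨b, Q, hQ, hσ⟩ ⟨c, P, hP, hτ⟩
    refine ⟨b + c, Q + taylor b P, add_mem hQ ?_, hσ.mul hτ⟩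
    rwa [mem_degreeLE, degree_taylor, ← mem_degreeLE]
  inv_mem' := by
    rintro σ ⟨c, P, hP, hσ⟩
    refine ⟨-c, -taylor (-c) P, neg_mem ?_, hσ.inv⟩
    rwa [mem_degreeLE, degree_taylor, ← mem_degreeLE]

noncomputable def shearSubgroup (d : ℕ) : Subgroup (CremonaField K ≃ₐ[K] CremonaField K) where
  carrier := {σ | ∃ P ∈ degreeLT K d, IsTriangular 0 P σ}
  one_mem' := ⟨0, zero_mem _, by constructor <;> simp⟩
  mul_mem' := by
    rintro σ τ ⟨Q, hQ, hσ⟩ ⟨P, hP, hτ⟩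
    exact ⟨Q + P, add_mem hQ hP, by simpa using hσ.mul hτ⟩
  inv_mem' := by
    rintro σ ⟨P, hP, hσ⟩
    exact ⟨-P, neg_mem hP, by simpa using hσ.inv⟩

variable {K}

theorem shearSubgroup_zero : shearSubgroup K 0 = ⊥ := by
  refine (Subgroup.eq_bot_iff_forall _).mpr ?_
  rintro σ ⟨P, hP, hσ⟩
  rw [mem_degreeLT, Nat.cast_zero, Nat.WithBot.lt_zero_iff, degree_eq_bot] at hP
  exact (hP ▸ hσ).eq_one

theorem commutatorElement_mem_shearSubgroup {d : ℕ} {σ τ : CremonaField K ≃ₐ[K] CremonaField K}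
    (hσ : σ ∈ triangularSubgroup K d) (hτ : τ ∈ triangularSubgroup K d) :
    ⁅σ, τ⁆ ∈ shearSubgroup K d := by
  obtain ⟨b, Q, hQ, hσ⟩ := hσ
  obtain ⟨c, P, hP, hτ⟩ := hτ
  refine ⟨_, add_mem ?_ (taylor_sub_mem_degreeLT b hP), hσ.commutatorElement hτ⟩
  rw [← neg_sub]
  exact neg_mem (taylor_sub_mem_degreeLT c hQ)

theorem commutatorElement_mem_shearSubgroup_pred {d : ℕ} {c : K} {P : K[X]}
    {σ τ : CremonaField K ≃ₐ[K] CremonaField K}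
    (hσ : σ ∈ shearSubgroup K d) (hτ : IsTriangular c P τ) :
    ⁅σ, τ⁆ ∈ shearSubgroup K (d - 1) := by
  cases d with
  | zero =>
    rw [shearSubgroup_zero, Subgroup.mem_bot] at hσ
    simp [hσ]
  | succ d =>
    obtain ⟨Q, hQ, hσ⟩ := hσ
    rw [degreeLT_succ_eq_degreeLE] at hQ
    refine ⟨Q - taylor c Q, ?_, by simpa using hσ.commutatorElement hτ⟩
    rw [← neg_sub]
    exact neg_mem (taylor_sub_mem_degreeLT c hQ)

theorem lowerCentralSeries_eq_bot_of_le_triangularSubgroup {n : ℕ}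
    {G : Subgroup (CremonaField K ≃ₐ[K] CremonaField K)} (hG : G ≤ triangularSubgroup K n) :
    (⊤ : Subgroup G).lowerCentralSeries (n + 1) = ⊥ := by
  -- `n - k` truncates, so the series stays at `shearSubgroup K 0 = ⊥` from index `n + 1` on
  let H : ℕ → Subgroup G
    | 0 => ⊤
    | k + 1 => (shearSubgroup K (n - k)).comap G.subtype
  have hH : Subgroup.IsDescendingCentralSeries H := by
    refine ⟨rfl, ?_⟩
    rintro σ (_ | k) hσ τ
    · exact commutatorElement_mem_shearSubgroup (hG σ.2) (hG τ.2)
    · obtain ⟨c, P, -, hτ⟩ := hG τ.2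
      exact commutatorElement_mem_shearSubgroup_pred hσ hτ
  refine eq_bot_iff.mpr ((Subgroup.descending_central_series_ge_lower H hH (n + 1)).trans ?_)
  simp [H, shearSubgroup_zero]

theorem exists_isNilpotent_nilpotencyClass_le {n : ℕ}
    {G : Subgroup (CremonaField K ≃ₐ[K] CremonaField K)} (hG : G ≤ triangularSubgroup K n) :
    ∃ _ : Group.IsNilpotent G, Group.nilpotencyClass G ≤ n + 1 :=
  have hbot := lowerCentralSeries_eq_bot_of_le_triangularSubgroup hG
  have := Subgroup.nilpotent_iff_lowerCentralSeries.mpr ⟨n + 1, hbot⟩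
  ⟨this, Subgroup.lowerCentralSeries_eq_bot_iff_nilpotencyClass_le.mp hbot⟩

end Cremona

theorem statement3_general (K : Type*) [Field K] (n : ℕ)
    (s : CremonaField K ≃ₐ[K] CremonaField K)
    (hsx : s (genX K) = genX K + 1) (hsy : s (genY K) = genY K) :
    ∃ hN : Group.IsNilpotent
      (Subgroup.closure ({s} ∪ {σ : CremonaField K ≃ₐ[K] CremonaField K |
          ∃ P : Polynomial K, P.natDegree ≤ n ∧ σ (genX K) = genX K ∧
            σ (genY K) = genY K + Polynomial.aeval (genX K) P}) :
        Subgroup (CremonaField K ≃ₐ[K] CremonaField K)),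
      @Group.nilpotencyClass
        (Subgroup.closure ({s} ∪ {σ : CremonaField K ≃ₐ[K] CremonaField K |
          ∃ P : Polynomial K, P.natDegree ≤ n ∧ σ (genX K) = genX K ∧
            σ (genY K) = genY K + Polynomial.aeval (genX K) P}) :
        Subgroup (CremonaField K ≃ₐ[K] CremonaField K)) _ ≤ n + 1 := by
  refine Cremona.exists_isNilpotent_nilpotencyClass_le ((Subgroup.closure_le _).mpr ?_)
  rintro σ (rfl | ⟨P, hP, hx, hy⟩)
  · exact ⟨1, 0, zero_mem _, by simpa using hsx, by simpa using hsy⟩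
  · exact ⟨0, P, mem_degreeLE.mpr (degree_le_of_natDegree_le hP), by simpa using hx, hy⟩

theorem statement3 (K : Type*) [Field K] (n : ℕ) (hn : 1 ≤ n)
    (s : CremonaField K ≃ₐ[K] CremonaField K)
    (hsx : s (genX K) = genX K + 1) (hsy : s (genY K) = genY K) :
    ∃ hN : Group.IsNilpotent
      (Subgroup.closure ({s} ∪ {σ : CremonaField K ≃ₐ[K] CremonaField K |
          ∃ P : Polynomial K, P.natDegree ≤ n ∧ σ (genX K) = genX K ∧
            σ (genY K) = genY K + Polynomial.aeval (genX K) P}) :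
        Subgroup (CremonaField K ≃ₐ[K] CremonaField K)),
      @Group.nilpotencyClass
        (Subgroup.closure ({s} ∪ {σ : CremonaField K ≃ₐ[K] CremonaField K |
          ∃ P : Polynomial K, P.natDegree ≤ n ∧ σ (genX K) = genX K ∧
            σ (genY K) = genY K + Polynomial.aeval (genX K) P}) :
        Subgroup (CremonaField K ≃ₐ[K] CremonaField K)) _ ≤ n + 1 :=
  statement3_general K n s hsx hsy
end

section
/- Let K be a field of characteristic zero. In the planar Cremona group Cr₂(K), let s be the automorphism with s(x) = x + 1, s(y) = y; let a be the automorphism with a(x) = x, a(y) = y + 1; and let m be the automorphism with m(x) = x, m(y) = x·y. Then the subgroup G of Cr₂(K) generated by {s, a, m} is solvable of derived length exactly 3: the third term of its derived series is trivial, but the second term is not. -/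
open MvPolynomial

/-!
Each of `s`, `a`, `m` has the form `(x, y) ↦ (x + c, u(x) y + f(x))` with `c ∈ K`, `u ≠ 0`, and
such maps form a group. A commutator of two of them fixes `x`; a commutator of two maps fixing `x`
has `u = 1`, i.e. is a translation `y ↦ y + f(x)`; translations commute. So `G⁽³⁾ = 1`.
On the other hand `⁅m, s⁆ : y ↦ x/(x+1) y` and `⁅a, m⁆ : y ↦ y + 1 - 1/x` lie in `G'`, and their
commutator sends `y` to `y + (x - 1)/x² ≠ y`, so `G⁽²⁾ ≠ 1`.
-/

open IntermediateField
open scoped commutatorElement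

theorem Subgroup.commutator_self_le {G : Type*} [Group G] (H : Subgroup G) : ⁅H, H⁆ ≤ H :=
  le_normalizer_iff_commutator_le_left.mp le_normalizer

section DerivedSeries

variable {G : Type*} [Group G] (H : Subgroup G)

theorem map_subtype_derivedSeries_zero : (derivedSeries H 0).map H.subtype = H := by
  rw [derivedSeries_zero, ← MonoidHom.range_eq_map, Subgroup.range_subtype]

theorem map_subtype_derivedSeries_succ (n : ℕ) :
    (derivedSeries H (n + 1)).map H.subtype =
      ⁅(derivedSeries H n).map H.subtype, (derivedSeries H n).map H.subtype⁆ :=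
  Subgroup.map_commutator _ _ _

theorem map_subtype_derivedSeries_succ_le {n : ℕ} {N N' : Subgroup G}
    (h : (derivedSeries H n).map H.subtype ≤ N) (hN : ⁅N, N⁆ ≤ N') :
    (derivedSeries H (n + 1)).map H.subtype ≤ N' := by
  rw [map_subtype_derivedSeries_succ]
  exact (Subgroup.commutator_mono h h).trans hN

end DerivedSeries

namespace AlgEquiv

section CommRing

variable {K E : Type*} [CommRing K] [CommRing E] [Algebra K E] {σ τ : E ≃ₐ[K] E}

theorem symm_apply_eq_sub_algebraMap {x : E} {c : K} (h : σ x = x + algebraMap K E c) :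
    σ.symm x = x - algebraMap K E c := by
  rw [symm_apply_eq, map_sub, h, commutes, add_sub_cancel_right]

theorem commutatorElement_apply_eq_self_of_apply_eq_add_algebraMap {x : E} {c d : K}
    (hσ : σ x = x + algebraMap K E c) (hτ : τ x = x + algebraMap K E d) : ⁅σ, τ⁆ x = x := by
  simp only [commutatorElement_def, mul_apply, aut_inv, symm_apply_eq_sub_algebraMap hσ,
    symm_apply_eq_sub_algebraMap hτ, map_sub, map_add, commutes, hσ, hτ]
  ring

end CommRing

variable {K E : Type*} [Field K] [Field E] [Algebra K E] {σ τ : E ≃ₐ[K] E}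

theorem symm_apply_eq_of_apply_eq_mul_add {y u f : E} (hu : u ≠ 0) (h : σ y = u * y + f) :
    σ.symm y = (σ.symm u)⁻¹ * (y - σ.symm f) := by
  rw [symm_apply_eq, map_mul, map_inv₀, map_sub, apply_symm_apply, apply_symm_apply, h]
  field_simp
  ring

theorem mem_fixingSubgroup_adjoin_simple_iff {x : E} :
    σ ∈ K⟮x⟯.fixingSubgroup ↔ σ x = x := by
  refine ⟨fun h ↦ (IntermediateField.mem_fixingSubgroup_iff _ _).mp h x
    (mem_adjoin_simple_self K x), fun h ↦ ?_⟩
  have key : (σ : E →ₐ[K] E).comp K⟮x⟯.val = K⟮x⟯.val :=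
    adjoin_algHom_ext K (by rintro _ rfl; exact h)
  exact (IntermediateField.mem_fixingSubgroup_iff _ _).mpr fun z hz ↦ congr($key ⟨z, hz⟩)

theorem apply_mem_adjoin_simple_of_apply_mem {x z : E} (h : σ x ∈ K⟮x⟯) (hz : z ∈ K⟮x⟯) :
    σ z ∈ K⟮x⟯ := by
  have : K⟮x⟯.map (σ : E →ₐ[K] E) ≤ K⟮x⟯ := by
    rw [adjoin_map, Set.image_singleton, adjoin_simple_le_iff]
    exact h
  exact this ⟨z, hz, rfl⟩

theorem commutatorElement_apply_of_apply_eq_mul_add {F : IntermediateField K E}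
    (hσ : σ ∈ F.fixingSubgroup) (hτ : τ ∈ F.fixingSubgroup) {y u v f g : E}
    (hu : u ∈ F) (hv : v ∈ F) (hf : f ∈ F) (hg : g ∈ F) (hu0 : u ≠ 0) (hv0 : v ≠ 0)
    (hσy : σ y = u * y + f) (hτy : τ y = v * y + g) :
    ⁅σ, τ⁆ y = y + ((v - 1) * f - (u - 1) * g) / (u * v) := by
  have hσ' := F.fixingSubgroup.inv_mem hσ
  have hτ' := F.fixingSubgroup.inv_mem hτ
  rw [IntermediateField.mem_fixingSubgroup_iff] at hσ hτ hσ' hτ'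
  rw [aut_inv] at hσ' hτ'
  simp only [commutatorElement_def, mul_apply, aut_inv, symm_apply_eq_of_apply_eq_mul_add hu0 hσy,
    symm_apply_eq_of_apply_eq_mul_add hv0 hτy, map_mul, map_add, map_sub, map_inv₀, hσy, hτy,
    hσ, hτ, hσ', hτ', hu, hv, hf, hg]
  field_simp
  ring

end AlgEquiv

section Subgroups

variable (K : Type*) {E : Type*} [Field K] [Field E] [Algebra K E]

open AlgEquiv in
def shiftAffineSubgroup (x y : E) : Subgroup (E ≃ₐ[K] E) where
  carrier := {σ | (∃ c : K, σ x = x + algebraMap K E c) ∧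
    ∃ u ∈ K⟮x⟯, ∃ f ∈ K⟮x⟯, u ≠ 0 ∧ σ y = u * y + f}
  one_mem' := ⟨⟨0, by simp⟩, 1, one_mem _, 0, zero_mem _, one_ne_zero, by simp⟩
  mul_mem' := by
    rintro σ τ ⟨⟨c, hσx⟩, u, hu, f, hf, hu0, hσy⟩ ⟨⟨d, hτx⟩, v, hv, g, hg, hv0, hτy⟩
    have hσF (z : E) : z ∈ K⟮x⟯ → σ z ∈ K⟮x⟯ := apply_mem_adjoin_simple_of_apply_mem
      (hσx ▸ add_mem (mem_adjoin_simple_self K x) (K⟮x⟯.algebraMap_mem c))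
    refine ⟨⟨c + d, ?_⟩, σ v * u, mul_mem (hσF v hv) hu, σ v * f + σ g,
      add_mem (mul_mem (hσF v hv) hf) (hσF g hg), mul_ne_zero (by simpa using hv0) hu0, ?_⟩
    · simp only [mul_apply, hτx, map_add, hσx, commutes]
      ring
    · simp only [mul_apply, hτy, map_add, map_mul, hσy]
      ring
  inv_mem' := by
    rintro σ ⟨⟨c, hσx⟩, u, hu, f, hf, hu0, hσy⟩
    have hσx' := symm_apply_eq_sub_algebraMap hσx
    have hσF (z : E) : z ∈ K⟮x⟯ → σ.symm z ∈ K⟮x⟯ := apply_mem_adjoin_simple_of_apply_mem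
      (hσx' ▸ sub_mem (mem_adjoin_simple_self K x) (K⟮x⟯.algebraMap_mem c))
    refine ⟨⟨-c, by rw [aut_inv, hσx', map_neg, sub_eq_add_neg]⟩, (σ.symm u)⁻¹,
      inv_mem (hσF u hu), -((σ.symm u)⁻¹ * σ.symm f), neg_mem (mul_mem (inv_mem (hσF u hu))
      (hσF f hf)), inv_ne_zero (by simpa using hu0), ?_⟩
    rw [aut_inv, symm_apply_eq_of_apply_eq_mul_add hu0 hσy]
    ring

variable {K}

def translationSubgroup (F : IntermediateField K E) (y : E) : Subgroup (E ≃ₐ[K] E) where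
  carrier := {σ | σ ∈ F.fixingSubgroup ∧ σ y - y ∈ F}
  one_mem' := ⟨one_mem _, by simp⟩
  mul_mem' := by
    rintro σ τ ⟨hσ, hσy⟩ ⟨hτ, hτy⟩
    refine ⟨mul_mem hσ hτ, ?_⟩
    have : (σ * τ) y - y = σ (τ y - y) + (σ y - y) := by
      simp only [AlgEquiv.mul_apply, map_sub]
      ring
    rw [this, (IntermediateField.mem_fixingSubgroup_iff _ _).mp hσ _ hτy]
    exact add_mem hτy hσy
  inv_mem' := by
    rintro σ ⟨hσ, hσy⟩
    refine ⟨inv_mem hσ, ?_⟩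
    have : σ⁻¹ y - y = -σ⁻¹ (σ y - y) := by
      simp only [map_sub, AlgEquiv.aut_inv, AlgEquiv.symm_apply_apply]
      ring
    rw [this, (IntermediateField.mem_fixingSubgroup_iff _ _).mp (inv_mem hσ) _ hσy]
    exact neg_mem hσy

variable {x y : E}

theorem commutator_shiftAffineSubgroup_le :
    ⁅shiftAffineSubgroup K x y, shiftAffineSubgroup K x y⁆ ≤
      shiftAffineSubgroup K x y ⊓ K⟮x⟯.fixingSubgroup := by
  rw [Subgroup.commutator_le]
  rintro σ hσ τ hτ
  refine ⟨(shiftAffineSubgroup K x y).commutator_self_le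
    (Subgroup.commutator_mem_commutator hσ hτ), ?_⟩
  obtain ⟨⟨c, hσx⟩, -⟩ := hσ
  obtain ⟨⟨d, hτx⟩, -⟩ := hτ
  exact AlgEquiv.mem_fixingSubgroup_adjoin_simple_iff.mpr
    (AlgEquiv.commutatorElement_apply_eq_self_of_apply_eq_add_algebraMap hσx hτx)

theorem commutator_shiftAffineSubgroup_inf_fixingSubgroup_le :
    ⁅shiftAffineSubgroup K x y ⊓ K⟮x⟯.fixingSubgroup,
      shiftAffineSubgroup K x y ⊓ K⟮x⟯.fixingSubgroup⁆ ≤ translationSubgroup K⟮x⟯ y := by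
  rw [Subgroup.commutator_le]
  rintro σ ⟨⟨-, u, hu, f, hf, hu0, hσy⟩, hσ⟩ τ ⟨⟨-, v, hv, g, hg, hv0, hτy⟩, hτ⟩
  refine ⟨K⟮x⟯.fixingSubgroup.commutator_self_le (Subgroup.commutator_mem_commutator hσ hτ), ?_⟩
  rw [AlgEquiv.commutatorElement_apply_of_apply_eq_mul_add hσ hτ hu hv hf hg hu0 hv0 hσy hτy,
    add_sub_cancel_left]
  exact div_mem (sub_mem (mul_mem (sub_mem hv (one_mem _)) hf)
    (mul_mem (sub_mem hu (one_mem _)) hg)) (mul_mem hu hv)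

theorem commutatorElement_apply_eq_self_of_mem_translationSubgroup {F : IntermediateField K E}
    {σ τ : E ≃ₐ[K] E} (hσ : σ ∈ translationSubgroup F y) (hτ : τ ∈ translationSubgroup F y) :
    ⁅σ, τ⁆ y = y := by
  have key := AlgEquiv.commutatorElement_apply_of_apply_eq_mul_add hσ.1 hτ.1 (one_mem F)
    (one_mem F) hσ.2 hτ.2 one_ne_zero one_ne_zero (by ring) (by ring)
  simpa using key

end Subgroups

namespace CremonaField

variable {K : Type*} [Field K]

theorem genX_ne_algebraMap (c : K) : genX K ≠ algebraMap K (CremonaField K) c := by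
  intro h
  rw [IsScalarTower.algebraMap_apply K (MvPolynomial (Fin 2) K), algebraMap_eq, genX] at h
  have := congrArg totalDegree (IsFractionRing.injective _ (CremonaField K) h)
  simp [totalDegree_X] at this

theorem genX_ne_zero : genX K ≠ 0 := by
  simpa using genX_ne_algebraMap (K := K) 0

theorem algEquiv_ext_s5 {σ τ : CremonaField K ≃ₐ[K] CremonaField K}
    (hx : σ (genX K) = τ (genX K)) (hy : σ (genY K) = τ (genY K)) : σ = τ := by
  have key : (σ : CremonaField K →+* CremonaField K) = τ := by
    refine IsLocalization.ringHom_ext (nonZeroDivisors (MvPolynomial (Fin 2) K))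
      (MvPolynomial.ringHom_ext (fun k ↦ ?_) (fun i ↦ ?_))
    · change σ (algebraMap _ _ (C k)) = τ (algebraMap _ _ (C k))
      rw [← algebraMap_eq, ← IsScalarTower.algebraMap_apply, AlgEquiv.commutes, AlgEquiv.commutes]
    · fin_cases i
      exacts [hx, hy]
  exact AlgEquiv.ext fun z ↦ DFunLike.congr_fun key z

theorem commutator_translationSubgroup_eq_bot :
    ⁅translationSubgroup K⟮genX K⟯ (genY K), translationSubgroup K⟮genX K⟯ (genY K)⁆ = ⊥ := by
  rw [eq_bot_iff, Subgroup.commutator_le]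
  intro σ hσ τ hτ
  refine algEquiv_ext_s5 ?_ (commutatorElement_apply_eq_self_of_mem_translationSubgroup hσ hτ)
  exact (IntermediateField.mem_fixingSubgroup_iff _ _).mp
    (Subgroup.commutator_self_le _ (Subgroup.commutator_mem_commutator hσ.1 hτ.1)) _
    (mem_adjoin_simple_self K _)

open AlgEquiv in
theorem commutatorElement_commutatorElement_ne_one {s a m : CremonaField K ≃ₐ[K] CremonaField K}
    (hsx : s (genX K) = genX K + 1) (hsy : s (genY K) = genY K)
    (hax : a (genX K) = genX K) (hay : a (genY K) = genY K + 1)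
    (hmx : m (genX K) = genX K) (hmy : m (genY K) = genX K * genY K) :
    ⁅⁅m, s⁆, ⁅a, m⁆⁆ ≠ 1 := by
  set x := genX K
  set y := genY K
  have hx0 : x ≠ 0 := genX_ne_zero
  have hx1 : x ≠ 1 := by simpa using genX_ne_algebraMap (K := K) 1
  have hx1' : x + 1 ≠ 0 := by
    simpa [eq_neg_iff_add_eq_zero] using genX_ne_algebraMap (K := K) (-1)
  have hm : m ∈ K⟮x⟯.fixingSubgroup := mem_fixingSubgroup_adjoin_simple_iff.mpr hmx
  have ha : a ∈ K⟮x⟯.fixingSubgroup := mem_fixingSubgroup_adjoin_simple_iff.mpr hax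
  have hμ : ⁅m, s⁆ ∈ K⟮x⟯.fixingSubgroup := mem_fixingSubgroup_adjoin_simple_iff.mpr
    (commutatorElement_apply_eq_self_of_apply_eq_add_algebraMap (c := 0) (d := 1)
      (by simp [hmx]) (by simp [hsx]))
  have hα : ⁅a, m⁆ ∈ K⟮x⟯.fixingSubgroup :=
    Subgroup.commutator_self_le _ (Subgroup.commutator_mem_commutator ha hm)
  have hmy' : m.symm y = x⁻¹ * y := by
    simpa [(symm_apply_eq m).mpr hmx.symm] using
      symm_apply_eq_of_apply_eq_mul_add hx0 (hmy.trans (add_zero _).symm)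
  have hμy : ⁅m, s⁆ y = x / (x + 1) * y + 0 := by
    simp only [commutatorElement_def, mul_apply, aut_inv, (symm_apply_eq s).mpr hsy.symm, hmy',
      map_mul, map_inv₀, map_add, map_one, hsx, hsy, hmx, hmy]
    field_simp
    ring
  have hαy : ⁅a, m⁆ y = 1 * y + (1 - x⁻¹) := by
    have hay' : a.symm y = y - 1 := by rw [symm_apply_eq, map_sub, hay, map_one]; ring
    simp only [commutatorElement_def, mul_apply, aut_inv, (symm_apply_eq a).mpr hax.symm, hmy',
      hay', map_mul, map_inv₀, map_sub, map_one, hax, hay, hmx, hmy]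
    field_simp
    ring
  have hxF : x ∈ K⟮x⟯ := mem_adjoin_simple_self K x
  intro h
  have key := commutatorElement_apply_of_apply_eq_mul_add hμ hα
    (div_mem hxF (add_mem hxF (one_mem _))) (one_mem _) (zero_mem _)
    (sub_mem (one_mem _) (inv_mem hxF)) (div_ne_zero hx0 hx1') one_ne_zero hμy hαy
  rw [h, one_apply] at key
  field_simp at key
  exact hx1 (by linear_combination -key)

end CremonaField

theorem statement5_general (K : Type*) [Field K]
    (s a m : CremonaField K ≃ₐ[K] CremonaField K)
    (hsx : s (genX K) = genX K + 1) (hsy : s (genY K) = genY K)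
    (hax : a (genX K) = genX K) (hay : a (genY K) = genY K + 1)
    (hmx : m (genX K) = genX K) (hmy : m (genY K) = genX K * genY K) :
    derivedSeries (Subgroup.closure {s, a, m} : Subgroup (CremonaField K ≃ₐ[K] CremonaField K)) 3 = ⊥ ∧
    derivedSeries (Subgroup.closure {s, a, m} : Subgroup (CremonaField K ≃ₐ[K] CremonaField K)) 2 ≠ ⊥ := by
  set H := (Subgroup.closure {s, a, m} : Subgroup (CremonaField K ≃ₐ[K] CremonaField K))
  have h0 : (derivedSeries H 0).map H.subtype ≤ shiftAffineSubgroup K (genX K) (genY K) := by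
    rw [map_subtype_derivedSeries_zero, Subgroup.closure_le]
    rintro σ (rfl | rfl | rfl)
    · exact ⟨⟨1, by simp [hsx]⟩, 1, one_mem _, 0, zero_mem _, one_ne_zero, by simp [hsy]⟩
    · exact ⟨⟨0, by simp [hax]⟩, 1, one_mem _, 1, one_mem _, one_ne_zero, by simp [hay]⟩
    · exact ⟨⟨0, by simp [hmx]⟩, _, mem_adjoin_simple_self K _, 0, zero_mem _,
        CremonaField.genX_ne_zero, by simp [hmy]⟩
  have h1 := map_subtype_derivedSeries_succ_le H h0 commutator_shiftAffineSubgroup_le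
  have h2 := map_subtype_derivedSeries_succ_le H h1
    commutator_shiftAffineSubgroup_inf_fixingSubgroup_le
  have h3 := map_subtype_derivedSeries_succ_le H h2
    CremonaField.commutator_translationSubgroup_eq_bot.le
  refine ⟨(Subgroup.map_eq_bot_iff_of_injective _ H.subtype_injective).mp (le_bot_iff.mp h3),
    fun h ↦ CremonaField.commutatorElement_commutatorElement_ne_one hsx hsy hax hay hmx hmy ?_⟩
  have hgen : ∀ g ∈ ({s, a, m} : Set _), g ∈ (derivedSeries H 0).map H.subtype := by
    rw [map_subtype_derivedSeries_zero]
    exact Subgroup.subset_closure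
  have hν : ⁅⁅m, s⁆, ⁅a, m⁆⁆ ∈ (derivedSeries H 2).map H.subtype := by
    simp only [map_subtype_derivedSeries_succ]
    exact Subgroup.commutator_mem_commutator
      (Subgroup.commutator_mem_commutator (hgen m (by simp)) (hgen s (by simp)))
      (Subgroup.commutator_mem_commutator (hgen a (by simp)) (hgen m (by simp)))
  rwa [h, Subgroup.map_bot, Subgroup.mem_bot] at hν

theorem statement5 (K : Type*) [Field K] [CharZero K]
    (s a m : CremonaField K ≃ₐ[K] CremonaField K)
    (hsx : s (genX K) = genX K + 1) (hsy : s (genY K) = genY K)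
    (hax : a (genX K) = genX K) (hay : a (genY K) = genY K + 1)
    (hmx : m (genX K) = genX K) (hmy : m (genY K) = genX K * genY K) :
    derivedSeries (Subgroup.closure {s, a, m} : Subgroup (CremonaField K ≃ₐ[K] CremonaField K)) 3 = ⊥ ∧
    derivedSeries (Subgroup.closure {s, a, m} : Subgroup (CremonaField K ≃ₐ[K] CremonaField K)) 2 ≠ ⊥ :=
  statement5_general K s a m hsx hsy hax hay hmx hmy
end

section
/- The group Aut(ℂ²) of polynomial automorphisms of the affine plane, i.e. the group of ℂ-algebra automorphisms of the polynomial ring ℂ[x,y] = MvPolynomial (Fin 2) ℂ, is not linear over any field: for every field F and every natural number d, there is no injective group homomorphism from (MvPolynomial (Fin 2) ℂ ≃ₐ[ℂ] MvPolynomial (Fin 2) ℂ) into GL_d(F). -/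
/-!
Suppose a group contains elements `aⱼ, bₖ` (`j, k ∈ ℕ`) such that `bₖ` commutes with `aⱼ` for
`j > k` but not with `aₖ`. Under a faithful representation in a finite-dimensional algebra, the
centralizers of `{aⱼ | j ≥ k}` then form a strictly increasing chain of subspaces, which is
impossible. In `Aut(ℂ[x, y])` take the shears `aⱼ : (x, y) ↦ (x, y + x ^ 2 ^ j)` and the scalings
`bₖ : (x, y) ↦ (ζ x, y)` with `ζ` a primitive `2 ^ (k + 1)`-th root of unity: `bₖ` commutes
with `aⱼ` iff `ζ ^ 2 ^ j = 1`.
-/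

theorem exists_commute_self_of_commute_of_lt (F : Type*) {A : Type*} [Field F] [Ring A]
    [Algebra F A] [FiniteDimensional F A] (a b : ℕ → A)
    (h : ∀ k j, k < j → Commute (b k) (a j)) : ∃ k, Commute (b k) (a k) := by
  by_contra! hne
  let V : ℕ → Subalgebra F A := fun k => Subalgebra.centralizer F (a '' Set.Ici k)
  have hV : StrictMono fun k => Subalgebra.toSubmodule (V k) := by
    refine Subalgebra.toSubmodule.strictMono.comp (strictMono_nat_of_lt_succ fun k => ?_)
    refine lt_of_le_of_ne (Subalgebra.centralizer_le F _ _ ?_) fun heq => hne k ?_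
    · exact Set.image_mono (Set.Ici_subset_Ici.2 k.le_succ)
    · have hb : b k ∈ V (k + 1) := by
        rw [Subalgebra.mem_centralizer_iff]
        rintro _ ⟨j, hj, rfl⟩
        exact (h k j hj).symm.eq
      rw [← heq, Subalgebra.mem_centralizer_iff] at hb
      exact (hb (a k) ⟨k, Set.self_mem_Ici, rfl⟩).symm
  exact not_strictMono_of_wellFoundedGT _ hV

theorem MonoidHom.not_injective_of_commute_of_lt (F : Type*) {A G : Type*} [Field F] [Ring A]
    [Algebra F A] [FiniteDimensional F A] [Group G] (φ : G →* Aˣ)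
    (a b : ℕ → G) (h : ∀ k j, k < j → Commute (b k) (a j)) (hk : ∀ k, ¬Commute (b k) (a k)) :
    ¬Function.Injective φ := by
  intro hφ
  obtain ⟨k, hcomm⟩ := exists_commute_self_of_commute_of_lt F (fun j => (φ (a j) : A))
    (fun k => φ (b k)) fun k j hkj => ((h k j hkj).map φ).units_val
  exact hk k (hφ (by simpa only [map_mul] using hcomm.units_of_val.eq))

namespace MvPolynomial

variable {R : Type*} [CommRing R]

noncomputable def shearAut (c : R) (m : ℕ) :
    MvPolynomial (Fin 2) R ≃ₐ[R] MvPolynomial (Fin 2) R :=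
  AlgEquiv.ofAlgHom (aeval ![X 0, X 1 + C c * X 0 ^ m]) (aeval ![X 0, X 1 - C c * X 0 ^ m])
    (algHom_ext fun i => by fin_cases i <;> simp)
    (algHom_ext fun i => by fin_cases i <;> simp)

noncomputable def scaleAut (u : Rˣ) : MvPolynomial (Fin 2) R ≃ₐ[R] MvPolynomial (Fin 2) R :=
  AlgEquiv.ofAlgHom (aeval ![C (u : R) * X 0, X 1]) (aeval ![C (↑u⁻¹ : R) * X 0, X 1])
    (algHom_ext fun i => by fin_cases i <;> simp [← mul_assoc, ← C_mul])
    (algHom_ext fun i => by fin_cases i <;> simp [← mul_assoc, ← C_mul])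

@[simp] lemma shearAut_X_zero (c : R) (m : ℕ) : shearAut c m (X 0) = X 0 := by
  simp [shearAut]

@[simp] lemma shearAut_X_one (c : R) (m : ℕ) : shearAut c m (X 1) = X 1 + C c * X 0 ^ m := by
  simp [shearAut]

@[simp] lemma shearAut_C (c : R) (m : ℕ) (a : R) : shearAut c m (C a) = C a :=
  (shearAut c m).commutes a

@[simp] lemma scaleAut_C (u : Rˣ) (a : R) : scaleAut u (C a) = C a :=
  (scaleAut u).commutes a

@[simp] lemma scaleAut_X_zero (u : Rˣ) : scaleAut u (X 0) = C (u : R) * X 0 := by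
  simp [scaleAut]

@[simp] lemma scaleAut_X_one (u : Rˣ) : scaleAut u (X 1) = X 1 := by
  simp [scaleAut]

theorem commute_scaleAut_shearAut_iff (u : Rˣ) (c : R) (m : ℕ) :
    Commute (scaleAut u) (shearAut c m) ↔ (u : R) ^ m * c = c := by
  have hX₁ : (scaleAut u * shearAut c m) (X 1) = X 1 + C ((u : R) ^ m * c) * X 0 ^ m := by
    simp only [AlgEquiv.mul_apply, shearAut_X_one, map_add, map_mul, map_pow, scaleAut_X_one,
      scaleAut_C, scaleAut_X_zero]
    ring
  constructor
  · intro hcomm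
    have := congrArg (· (X 1)) hcomm.eq
    simp only [hX₁, AlgEquiv.mul_apply, scaleAut_X_one, shearAut_X_one, add_right_inj,
      C_mul_X_pow_eq_monomial] at this
    simpa using congrArg (coeff (Finsupp.single 0 m)) this
  · intro h
    refine AlgEquiv.coe_toAlgHom_injective (algHom_ext fun i => ?_)
    fin_cases i
    · simp [AlgEquiv.mul_apply]
    · simp [hX₁, h, AlgEquiv.mul_apply]

theorem commute_scaleAut_shearAut_two_pow_iff {ζ : Rˣ} {k : ℕ}
    (hζ : IsPrimitiveRoot (ζ : R) (2 ^ (k + 1))) (j : ℕ) :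
    Commute (scaleAut ζ) (shearAut 1 (2 ^ j)) ↔ k < j := by
  rw [commute_scaleAut_shearAut_iff, mul_one, hζ.pow_eq_one_iff_dvd,
    Nat.pow_dvd_pow_iff_le_right one_lt_two, Nat.succ_le_iff]

end MvPolynomial

open MvPolynomial

theorem statement10 (F : Type*) [Field F] (d : ℕ) :
    ¬∃ φ : (MvPolynomial (Fin 2) ℂ ≃ₐ[ℂ] MvPolynomial (Fin 2) ℂ) →*
        Matrix.GeneralLinearGroup (Fin d) F, Function.Injective φ := by
  rintro ⟨φ, hφ⟩
  let ζ (k : ℕ) : ℂˣ :=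
    Units.mk0 _ (Complex.exp_ne_zero (2 * Real.pi * Complex.I / (2 ^ (k + 1) : ℕ)))
  have hζ (k : ℕ) : IsPrimitiveRoot (ζ k : ℂ) (2 ^ (k + 1)) :=
    Complex.isPrimitiveRoot_exp _ (by positivity)
  exact φ.not_injective_of_commute_of_lt F (fun j => shearAut 1 (2 ^ j))
    (fun k => scaleAut (ζ k)) (fun k j => (commute_scaleAut_shearAut_two_pow_iff (hζ k) j).2)
    (fun k => (commute_scaleAut_shearAut_two_pow_iff (hζ k) k).not.2 (lt_irrefl k)) hφ
end

section
/- Let G be a group such that for every natural number n there exists a subgroup H of G that is torsion-free, nilpotent, and of nilpotency class exactly n. Then for every field F and every natural number d, there is no injective group homomorphism from G into GL_d(F). -/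
/-!
A torsion-free nilpotent subgroup of `GL_d` has nilpotency class at most `d ^ 3`. By Mal'cev,
`x ^ m ∈ Z_j` forces `x ∈ Z_j` in a torsion-free nilpotent group, so it suffices that for a
representation `ρ` of a nilpotent group on `V` over an algebraically closed field, every element has
a power in the `(dim V) ^ 3`-th term of the upper central series taken modulo `ker ρ`. This goes by
induction on `dim V`. If `V` is irreducible, the centre of the image acts by scalars (Schur) and
commutators have determinant `1`, so `Z₂ / Z₁`, and with it every `Z_{j+1} / Z_j`, has exponent
dividing `dim V`. If `p` is a proper invariant subspace, induction on `p` and `V ⧸ p` yields a power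
in the subgroup `K` acting trivially on both. On `K`, `z ↦ ρ z - 1` turns commutation with `g` into
`1 - (conjugation by g)`, which is unipotent on the span of the image; Kolchin's theorem then kills
`K` after `(dim V) ^ 2` further commutators.
-/

/-- The pre-2025 Mathlib `Monoid.IsTorsionFree`: no nontrivial element has finite order. -/
def Monoid.IsTorsionFree (G : Type*) [Monoid G] : Prop :=
  ∀ g : G, g ≠ 1 → ¬IsOfFinOrder g

open Module
open scoped commutatorElement

theorem commutatorElement_pow_left_of_commute {G : Type*} [Group G] {x y : G}
    (h : Commute x ⁅x, y⁆) (e : ℕ) : ⁅x ^ e, y⁆ = ⁅x, y⁆ ^ e := by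
  induction e with
  | zero => simp
  | succ e ih =>
    rw [pow_succ, commutatorElement_mul_left_eq_conj_mul, ih, (h.pow_left e).eq,
      mul_inv_cancel_right, pow_succ']

namespace Subgroup

variable {G : Type*} [Group G] {j : ℕ}

/-- Modulo `Z_j`, `x` commutes with `⁅x, y⁆ ∈ Z_{j+1}`. -/
theorem commutatorElement_pow_left_mem_iff {x y : G} (h : ⁅x, y⁆ ∈ upperCentralSeries G (j + 1))
    (e : ℕ) : ⁅x ^ e, y⁆ ∈ upperCentralSeries G j ↔ ⁅x, y⁆ ^ e ∈ upperCentralSeries G j := by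
  let π := QuotientGroup.mk' (upperCentralSeries G j)
  have hcomm : Commute (π x) ⁅π x, π y⁆ := by
    rw [← commutatorElement_eq_one_iff_commute, ← map_commutatorElement, ← map_commutatorElement,
      ← commutatorElement_inv, map_inv, inv_eq_one, QuotientGroup.mk'_apply,
      QuotientGroup.eq_one_iff]
    exact mem_upperCentralSeries_succ_iff.mp h x
  rw [← QuotientGroup.eq_one_iff, ← QuotientGroup.eq_one_iff (⁅x, y⁆ ^ e)]
  change π _ = 1 ↔ π _ = 1
  rw [map_pow, map_commutatorElement, map_commutatorElement, map_pow,
    commutatorElement_pow_left_of_commute hcomm]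

theorem mem_upperCentralSeries_of_pow_mem_of_mem_succ (htf : Monoid.IsTorsionFree G) {m : ℕ}
    (hm : m ≠ 0) {x : G} (hx : x ∈ upperCentralSeries G (j + 1))
    (hxm : x ^ m ∈ upperCentralSeries G j) : x ∈ upperCentralSeries G j := by
  induction j generalizing x with
  | zero =>
    by_contra hne
    exact htf x hne (isOfFinOrder_iff_pow_eq_one.mpr ⟨m, Nat.pos_of_ne_zero hm, hxm⟩)
  | succ j ih =>
    rw [mem_upperCentralSeries_succ_iff] at hx hxm ⊢
    intro y
    exact ih (hx y) ((commutatorElement_pow_left_mem_iff (hx y) m).mp (hxm y))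

theorem mem_upperCentralSeries_of_pow_mem [Group.IsNilpotent G] (htf : Monoid.IsTorsionFree G)
    {m : ℕ} (hm : m ≠ 0) {x : G} (hxm : x ^ m ∈ upperCentralSeries G j) :
    x ∈ upperCentralSeries G j := by
  obtain ⟨c, hc⟩ := Group.IsNilpotent.nilpotent G
  suffices ∀ i, x ∈ upperCentralSeries G (j + i) → x ∈ upperCentralSeries G j from
    this c (upperCentralSeries_mono G (Nat.le_add_left c j) (hc ▸ mem_top x))
  intro i
  induction i with
  | zero => exact fun h => h
  | succ i ih =>
    exact fun h => ih (mem_upperCentralSeries_of_pow_mem_of_mem_succ htf hm h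
      (upperCentralSeries_mono G (Nat.le_add_right j i) hxm))

theorem forall_pow_mem_upperCentralSeries_succ {e : ℕ}
    (he : ∀ x ∈ upperCentralSeries G (j + 1), x ^ e ∈ upperCentralSeries G j) :
    ∀ x ∈ upperCentralSeries G (j + 2), x ^ e ∈ upperCentralSeries G (j + 1) := by
  intro x hx
  rw [mem_upperCentralSeries_succ_iff] at hx ⊢
  exact fun y => (commutatorElement_pow_left_mem_iff (hx y) e).mpr (he _ (hx y))

theorem exists_pow_mem_center [Group.IsNilpotent G] {e : ℕ} (he₀ : e ≠ 0)
    (he : ∀ x ∈ upperCentralSeries G 2, x ^ e ∈ upperCentralSeries G 1) (x : G) :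
    ∃ m ≠ 0, x ^ m ∈ center G := by
  have hstep : ∀ i, ∀ x ∈ upperCentralSeries G (i + 2), x ^ e ∈ upperCentralSeries G (i + 1) := by
    intro i
    induction i with
    | zero => exact he
    | succ i ih => exact forall_pow_mem_upperCentralSeries_succ ih
  have hiter : ∀ i, ∀ x ∈ upperCentralSeries G (i + 1), x ^ e ^ i ∈ upperCentralSeries G 1 := by
    intro i
    induction i with
    | zero => simp
    | succ i ih => exact fun x hx => by rw [pow_succ', pow_mul]; exact ih _ (hstep i x hx)
  obtain ⟨c, hc⟩ := Group.IsNilpotent.nilpotent G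
  refine ⟨e ^ c, pow_ne_zero c he₀, ?_⟩
  rw [← upperCentralSeries_one]
  exact hiter c x (upperCentralSeries_mono G (Nat.le_succ c) (hc ▸ mem_top x))

section RelUpperCentralSeries

variable (N : Subgroup G) [N.Normal]

def relUpperCentralSeries (j : ℕ) : Subgroup G :=
  (upperCentralSeries (G ⧸ N) j).comap (QuotientGroup.mk' N)

variable {N}

@[simp]
theorem relUpperCentralSeries_zero : N.relUpperCentralSeries 0 = N := by
  ext x
  simp [relUpperCentralSeries]

theorem mem_relUpperCentralSeries_succ_iff {x : G} :
    x ∈ N.relUpperCentralSeries (j + 1) ↔ ∀ y, ⁅x, y⁆ ∈ N.relUpperCentralSeries j := by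
  simp only [relUpperCentralSeries, mem_comap, mem_upperCentralSeries_succ_iff,
    (QuotientGroup.mk'_surjective N).forall, map_commutatorElement]

theorem relUpperCentralSeries_mono : Monotone N.relUpperCentralSeries :=
  fun _ _ h => comap_mono (upperCentralSeries_mono _ h)

theorem relUpperCentralSeries_of_eq_bot (h : N = ⊥) (j : ℕ) :
    N.relUpperCentralSeries j = upperCentralSeries G j := by
  subst h
  induction j with
  | zero => simp
  | succ j ih =>
    ext x
    simp only [mem_relUpperCentralSeries_succ_iff, mem_upperCentralSeries_succ_iff, ih]

theorem inf_relUpperCentralSeries_le (N₁ N₂ : Subgroup G) [N₁.Normal] [N₂.Normal] (j : ℕ) :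
    N₁.relUpperCentralSeries j ⊓ N₂.relUpperCentralSeries j ≤
      (N₁ ⊓ N₂).relUpperCentralSeries j := by
  induction j with
  | zero => simp
  | succ j ih =>
    intro x hx
    rw [mem_inf, mem_relUpperCentralSeries_succ_iff, mem_relUpperCentralSeries_succ_iff] at hx
    exact mem_relUpperCentralSeries_succ_iff.mpr fun y => ih ⟨hx.1 y, hx.2 y⟩

theorem relUpperCentralSeries_le_add {M : Subgroup G} [M.Normal] {k : ℕ}
    (h : N ≤ M.relUpperCentralSeries k) (j : ℕ) :
    N.relUpperCentralSeries j ≤ M.relUpperCentralSeries (j + k) := by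
  induction j with
  | zero => simpa using h
  | succ j ih =>
    intro x hx
    rw [Nat.add_right_comm, mem_relUpperCentralSeries_succ_iff]
    exact fun y => ih (mem_relUpperCentralSeries_succ_iff.mp hx y)

end RelUpperCentralSeries

end Subgroup

theorem Module.End.ker_ne_bot_of_isNilpotent {k W : Type*} [Field k] [AddCommGroup W] [Module k W]
    [FiniteDimensional k W] [Nontrivial W] {f : End k W} (hf : IsNilpotent f) :
    LinearMap.ker f ≠ ⊥ := fun h =>
  ((Module.End.isUnit_iff f).mpr ⟨LinearMap.ker_eq_bot.mp h,
    LinearMap.injective_iff_surjective.mp (LinearMap.ker_eq_bot.mp h)⟩).not_isNilpotent hf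

namespace Representation

variable {k G W : Type*} [Field k] [Group G] [AddCommGroup W] [Module k W]
  (τ : Representation k G W)

section SubQuotient

variable (p : Submodule k W) (hp : ∀ g, p ≤ p.comap (τ g))

theorem isNilpotent_subrepresentation_sub_one {g : G} {n : ℕ}
    (h : p ≤ LinearMap.ker ((τ g - 1) ^ n)) : IsNilpotent (τ.subrepresentation p hp g - 1) := by
  refine ⟨n, LinearMap.ext fun v => Subtype.ext ?_⟩
  have hsub : τ.subrepresentation p hp g - 1 = (τ g - 1).restrict fun v hv =>
      p.sub_mem (hp g hv) hv := by
    ext; simp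
  rw [hsub, Module.End.pow_restrict]
  exact h v.2

theorem isNilpotent_quotient_sub_one {g : G} (h : IsNilpotent (τ g - 1)) :
    IsNilpotent (τ.quotient p hp g - 1) := by
  have hquot : τ.quotient p hp g - 1 = p.mapQ p (τ g - 1) fun v hv => by
      simpa using p.sub_mem (hp g hv) hv := by
    ext; simp
  rw [hquot]
  exact Module.End.IsNilpotent.mapQ _ h

end SubQuotient

def fixedSeries : ℕ → Submodule k W
  | 0 => ⊥
  | j + 1 => ⨅ g, (fixedSeries j).comap (τ g - 1)

variable {τ}

@[simp]
theorem fixedSeries_zero : τ.fixedSeries 0 = ⊥ := rfl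

theorem mem_fixedSeries_succ_iff {j : ℕ} {w : W} :
    w ∈ τ.fixedSeries (j + 1) ↔ ∀ g, τ g w - w ∈ τ.fixedSeries j := by
  simp [fixedSeries]

theorem mem_fixedSeries_one_iff {w : W} : w ∈ τ.fixedSeries 1 ↔ ∀ g, τ g w = w := by
  simp [mem_fixedSeries_succ_iff, sub_eq_zero]

theorem fixedSeries_mono : Monotone τ.fixedSeries := by
  refine monotone_nat_of_le_succ fun j => ?_
  induction j with
  | zero => simp
  | succ j ih =>
    exact fun w hw => mem_fixedSeries_succ_iff.mpr fun g => ih (mem_fixedSeries_succ_iff.mp hw g)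

theorem comap_mkQ_fixedSeries_quotient_le {p : Submodule k W} (hp : ∀ g, p ≤ p.comap (τ g))
    {i : ℕ} (h : p ≤ τ.fixedSeries i) (j : ℕ) :
    ((τ.quotient p hp).fixedSeries j).comap p.mkQ ≤ τ.fixedSeries (j + i) := by
  induction j with
  | zero => simpa using h
  | succ j ih =>
    intro w hw
    rw [Submodule.mem_comap, mem_fixedSeries_succ_iff] at hw
    rw [Nat.add_right_comm, mem_fixedSeries_succ_iff]
    exact fun g => ih (by simpa using hw g)

section Kolchin

variable [Group.IsNilpotent G]

/-- A nontrivial central element `τ g₀` of the image has a proper nonzero invariant kernel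
`ker (τ g₀ - 1)`; restricting to it lowers the dimension. -/
theorem fixedSeries_one_ne_bot [FiniteDimensional k W] [Nontrivial W]
    (hτ : ∀ g, IsNilpotent (τ g - 1)) : τ.fixedSeries 1 ≠ ⊥ := by
  obtain ⟨n, hn⟩ : ∃ n, finrank k W = n := ⟨_, rfl⟩
  induction n using Nat.strong_induction_on generalizing W with
  | _ n ih =>
  by_cases htriv : ∀ g, τ g = 1
  · obtain ⟨w, hw⟩ := exists_ne (0 : W)
    exact (Submodule.ne_bot_iff _).mpr
      ⟨w, mem_fixedSeries_one_iff.mpr fun g => by simp [htriv], hw⟩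
  obtain ⟨g₁, hg₁⟩ := not_forall.mp htriv
  have : Nontrivial τ.asGroupHom.range := by
    refine nontrivial_of_ne ⟨_, g₁, rfl⟩ 1 fun h => hg₁ ?_
    rw [Subtype.ext_iff, Units.ext_iff] at h
    simpa [asGroupHom_apply] using h
  have : Group.IsNilpotent τ.asGroupHom.range :=
    Group.nilpotent_of_surjective _ τ.asGroupHom.rangeRestrict_surjective
  obtain ⟨⟨⟨_, g₀, rfl⟩, hcenter⟩, hne⟩ :=
    Subgroup.ne_bot_iff_exists_ne_one.mp (Group.IsNilpotent.center_ne_bot τ.asGroupHom.range)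
  have hcomm (g : G) : τ g * τ g₀ = τ g₀ * τ g := by
    have := Subgroup.mem_center_iff.mp hcenter ⟨_, g, rfl⟩
    rw [Subtype.ext_iff, Units.ext_iff] at this
    simpa [asGroupHom_apply] using this
  let W₁ := LinearMap.ker (τ g₀ - 1)
  have hW₁ (g : G) : W₁ ≤ W₁.comap (τ g) := fun v hv => by
    have hv : τ g₀ v = v := by simpa [W₁, sub_eq_zero] using hv
    simpa [W₁, sub_eq_zero, hv] using (LinearMap.congr_fun (hcomm g) v).symm
  have htop : W₁ ≠ ⊤ := fun h => hne <| Subtype.ext <| Subtype.ext <| Units.ext <| by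
    simpa [asGroupHom_apply, sub_eq_zero] using LinearMap.ker_eq_top.mp h
  have : Nontrivial W₁ :=
    Submodule.nontrivial_iff_ne_bot.mpr (Module.End.ker_ne_bot_of_isNilpotent (hτ g₀))
  have hσ (g : G) : IsNilpotent (τ.subrepresentation W₁ hW₁ g - 1) := by
    obtain ⟨m, hm⟩ := hτ g
    exact isNilpotent_subrepresentation_sub_one τ W₁ hW₁ (n := m) (by simp [hm])
  obtain ⟨w, hw, hw0⟩ := (Submodule.ne_bot_iff _).mp
    (ih _ (hn ▸ Submodule.finrank_lt htop) (τ := τ.subrepresentation W₁ hW₁) hσ rfl)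
  refine (Submodule.ne_bot_iff _).mpr
    ⟨w, mem_fixedSeries_one_iff.mpr fun g => ?_, by simpa using hw0⟩
  simpa [Subtype.ext_iff] using mem_fixedSeries_one_iff.mp hw g

/-- Kolchin's theorem for a nilpotent group of unipotent operators. -/
theorem fixedSeries_finrank_eq_top [FiniteDimensional k W] (hτ : ∀ g, IsNilpotent (τ g - 1)) :
    τ.fixedSeries (finrank k W) = ⊤ := by
  obtain ⟨n, hn⟩ : ∃ n, finrank k W = n := ⟨_, rfl⟩
  induction n using Nat.strong_induction_on generalizing W with
  | _ n ih =>
  rcases subsingleton_or_nontrivial W with hW | hW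
  · exact Subsingleton.elim _ _
  let W₀ := τ.fixedSeries 1
  have hW₀ (g : G) : W₀ ≤ W₀.comap (τ g) := fun w hw => by
    have hw := mem_fixedSeries_one_iff.mp hw
    simpa [W₀, mem_fixedSeries_one_iff, hw g] using hw
  have : Nontrivial W₀ := Submodule.nontrivial_iff_ne_bot.mpr (fixedSeries_one_ne_bot hτ)
  have hlt : finrank k (W ⧸ W₀) < n := by
    have := Submodule.finrank_quotient_add_finrank W₀
    have := finrank_pos (R := k) (M := W₀)
    omega
  have hq := ih _ hlt (τ := τ.quotient W₀ hW₀)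
    (fun g => isNilpotent_quotient_sub_one _ _ _ (hτ g)) rfl
  rw [hn, eq_top_iff]
  calc ⊤ = ((τ.quotient W₀ hW₀).fixedSeries (finrank k (W ⧸ W₀))).comap W₀.mkQ := by
        rw [hq, Submodule.comap_top]
    _ ≤ τ.fixedSeries (finrank k (W ⧸ W₀) + 1) := comap_mkQ_fixedSeries_quotient_le hW₀ le_rfl _
    _ ≤ τ.fixedSeries n := fixedSeries_mono hlt

end Kolchin

section FlagKernel

variable {V : Type*} [AddCommGroup V] [Module k V] (ρ : Representation k G V) (p : Submodule k V)
  (hp : ∀ g, p ≤ p.comap (ρ g))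

def flagKernel : Subgroup G :=
  MonoidHom.ker (ρ.subrepresentation p hp) ⊓ MonoidHom.ker (ρ.quotient p hp)

instance : (ρ.flagKernel p hp).Normal := by
  unfold flagKernel; infer_instance

variable {ρ p hp}

theorem mem_flagKernel_iff {z : G} :
    z ∈ ρ.flagKernel p hp ↔ (∀ v ∈ p, (ρ z - 1) v = 0) ∧ ∀ v, (ρ z - 1) v ∈ p := by
  simp [flagKernel, LinearMap.ext_iff, Subtype.ext_iff, (Submodule.mkQ_surjective p).forall,
    Submodule.Quotient.eq, sub_eq_zero]

theorem commutatorElement_mem_flagKernel {z : G} (hz : z ∈ ρ.flagKernel p hp) (g : G) :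
    ⁅z, g⁆ ∈ ρ.flagKernel p hp := by
  rw [commutatorElement_def, mul_assoc, mul_assoc]
  exact mul_mem hz
    (by simpa [mul_assoc] using Subgroup.Normal.conj_mem inferInstance _ (inv_mem hz) g)

variable (ρ) in
theorem linHom_sub_one (g z : G) : linHom ρ ρ g (ρ z - 1) = ρ (g * z * g⁻¹) - 1 := by
  ext v
  simp

/-- Since `ρ z - 1` maps `V` into `p` and kills `p`, the commutator is linear in it. -/
theorem sub_one_commutatorElement {z : G} (hz : z ∈ ρ.flagKernel p hp) (g : G) :
    ρ ⁅z, g⁆ - 1 = (ρ z - 1) - linHom ρ ρ g (ρ z - 1) := by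
  obtain ⟨hzp, hzV⟩ := mem_flagKernel_iff.mp hz
  obtain ⟨D, hD⟩ : ∃ D, ρ z = 1 + D := ⟨ρ z - 1, by abel⟩
  rw [hD, add_sub_cancel_left] at hzp hzV ⊢
  have hkill (f : End k V) (hf : ∀ v, f v ∈ p) : D * f = 0 :=
    LinearMap.ext fun v => hzp _ (hf v)
  have hinv : ρ z⁻¹ = 1 - D := by
    have h1 : ρ z * (1 - D) = 1 := by
      rw [hD, show (1 + D) * (1 - D) = 1 - D * D by noncomm_ring, hkill D hzV, sub_zero]
    calc ρ z⁻¹ = ρ z⁻¹ * (ρ z * (1 - D)) := by rw [h1, mul_one]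
      _ = 1 - D := by rw [← mul_assoc, ← map_mul, inv_mul_cancel, map_one, one_mul]
  have hgg : ρ g * ρ g⁻¹ = 1 := by rw [← map_mul, mul_inv_cancel, map_one]
  have hDE : D * (ρ g * D * ρ g⁻¹) = 0 := hkill _ fun v => hp g (hzV _)
  calc ρ ⁅z, g⁆ - 1 = (1 + D) * (ρ g * ρ g⁻¹ - ρ g * D * ρ g⁻¹) - 1 := by
        rw [commutatorElement_def, map_mul, map_mul, map_mul, hD, hinv]; noncomm_ring
    _ = D - ρ g * D * ρ g⁻¹ - D * (ρ g * D * ρ g⁻¹) := by rw [hgg]; noncomm_ring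
    _ = D - linHom ρ ρ g D := by rw [hDE, sub_zero]; rfl

variable (ρ p hp)

def flagKernelSpan : Submodule k (End k V) :=
  Submodule.span k ((fun z => ρ z - 1) '' ρ.flagKernel p hp)

theorem flagKernelSpan_le_comap (g : G) :
    ρ.flagKernelSpan p hp ≤ (ρ.flagKernelSpan p hp).comap (linHom ρ ρ g) := by
  refine Submodule.span_le.mpr ?_
  rintro _ ⟨z, hz, rfl⟩
  rw [SetLike.mem_coe, Submodule.mem_comap, linHom_sub_one]
  exact Submodule.subset_span ⟨_, Subgroup.Normal.conj_mem inferInstance z hz g, rfl⟩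

variable [Group.IsNilpotent G]

theorem isNilpotent_flagKernelSpan_sub_one (g : G) :
    IsNilpotent ((linHom ρ ρ).subrepresentation _ (ρ.flagKernelSpan_le_comap p hp) g - 1) := by
  have key (j : ℕ) : ∀ z ∈ ρ.flagKernel p hp, z ∈ Subgroup.upperCentralSeries G j →
      ((linHom ρ ρ g - 1) ^ j) (ρ z - 1) = 0 := by
    induction j with
    | zero => intro z _ hz; simp_all
    | succ j ih =>
      intro z hz hzj
      have hstep : (linHom ρ ρ g - 1) (ρ z - 1) = -(ρ ⁅z, g⁆ - 1) := by
        rw [sub_one_commutatorElement hz]; simp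
      rw [pow_succ, Module.End.mul_apply, hstep, map_neg,
        ih _ (commutatorElement_mem_flagKernel hz g)
          (Subgroup.mem_upperCentralSeries_succ_iff.mp hzj g), neg_zero]
  obtain ⟨c, hc⟩ := Group.IsNilpotent.nilpotent G
  refine isNilpotent_subrepresentation_sub_one _ _ _ (n := c) (Submodule.span_le.mpr ?_)
  rintro _ ⟨z, hz, rfl⟩
  exact key c z hz (hc ▸ Subgroup.mem_top z)

/-- Kolchin's theorem for the conjugation action on `flagKernelSpan`, which has dimension at most
`(dim V) ^ 2`. -/
theorem flagKernel_le_relUpperCentralSeries [FiniteDimensional k V] :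
    ρ.flagKernel p hp ≤ (MonoidHom.ker ρ).relUpperCentralSeries (finrank k V ^ 2) := by
  let σ := (linHom ρ ρ).subrepresentation _ (ρ.flagKernelSpan_le_comap p hp)
  have hσ : σ.fixedSeries (finrank k V ^ 2) = ⊤ := by
    refine top_le_iff.mp <| (fixedSeries_finrank_eq_top
      (ρ.isNilpotent_flagKernelSpan_sub_one p hp)).symm.le.trans (fixedSeries_mono ?_)
    calc finrank k (ρ.flagKernelSpan p hp) ≤ finrank k (End k V) := Submodule.finrank_le _
      _ = finrank k V ^ 2 := by rw [Module.finrank_linearMap, sq]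
  have key (j : ℕ) : ∀ z (hz : z ∈ ρ.flagKernel p hp),
      (⟨ρ z - 1, Submodule.subset_span ⟨z, hz, rfl⟩⟩ : ρ.flagKernelSpan p hp) ∈ σ.fixedSeries j →
      z ∈ (MonoidHom.ker ρ).relUpperCentralSeries j := by
    induction j with
    | zero => intro z _ h; simpa [Subtype.ext_iff, sub_eq_zero] using h
    | succ j ih =>
      intro z hz h
      refine Subgroup.mem_relUpperCentralSeries_succ_iff.mpr fun g =>
        ih _ (commutatorElement_mem_flagKernel hz g) ?_
      convert neg_mem (mem_fixedSeries_succ_iff.mp h g) using 1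
      ext1
      simp [σ, sub_one_commutatorElement hz]
  exact fun z hz => key _ z hz (hσ ▸ Submodule.mem_top)

end FlagKernel

section Irreducible

variable {V : Type*} [AddCommGroup V] [Module k V] {ρ : Representation k G V}
  [FiniteDimensional k V] [Nontrivial V]

theorem exists_eq_smul_one_of_forall_commute [IsAlgClosed k]
    (hirr : ∀ p : Submodule k V, (∀ g, p ≤ p.comap (ρ g)) → p = ⊥ ∨ p = ⊤)
    {f : End k V} (hf : ∀ g, Commute f (ρ g)) : ∃ c : k, f = c • 1 := by
  obtain ⟨c, hc⟩ := f.exists_eigenvalue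
  refine ⟨c, ?_⟩
  have hinv (g : G) : f.eigenspace c ≤ (f.eigenspace c).comap (ρ g) := fun v hv => by
    rw [Submodule.mem_comap, Module.End.mem_eigenspace_iff] at *
    rw [← Module.End.mul_apply, (hf g).eq, Module.End.mul_apply, hv, map_smul]
  rcases hirr _ hinv with h | h
  · exact absurd h (Module.End.hasEigenvalue_iff.mp hc)
  · ext v
    simpa using Module.End.mem_eigenspace_iff.mp (h ▸ Submodule.mem_top : v ∈ f.eigenspace c)

/-- Central elements of the image act by scalars `c` with `c ^ dim V = det = 1` on commutators,
so `Z₂ / Z₁` of the image has exponent dividing `dim V`. -/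
theorem exists_pow_mem_relUpperCentralSeries_one [IsAlgClosed k] [Group.IsNilpotent G]
    (hirr : ∀ p : Submodule k V, (∀ g, p ≤ p.comap (ρ g)) → p = ⊥ ∨ p = ⊤) (g : G) :
    ∃ m ≠ 0, g ^ m ∈ (MonoidHom.ker ρ).relUpperCentralSeries 1 := by
  let ρ' := QuotientGroup.lift (MonoidHom.ker ρ) ρ le_rfl
  have hρ' {q : G ⧸ MonoidHom.ker ρ} (hq : ρ' q = 1) : q = 1 := by
    induction q using QuotientGroup.induction_on with
    | H g => exact (QuotientGroup.eq_one_iff g).mpr hq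
  have hdet (x y : G ⧸ MonoidHom.ker ρ) : LinearMap.det (ρ' ⁅x, y⁆) = 1 := by
    have h (q : G ⧸ MonoidHom.ker ρ) : LinearMap.det (ρ' q) * LinearMap.det (ρ' q⁻¹) = 1 := by
      rw [← map_mul, ← map_mul, mul_inv_cancel, map_one, map_one]
    rw [commutatorElement_def, map_mul, map_mul, map_mul, map_mul, map_mul, map_mul]
    linear_combination (LinearMap.det (ρ' y) * LinearMap.det (ρ' y⁻¹)) * h x + h y
  have hpow : ∀ x ∈ Subgroup.upperCentralSeries (G ⧸ MonoidHom.ker ρ) 2,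
      x ^ finrank k V ∈ Subgroup.upperCentralSeries (G ⧸ MonoidHom.ker ρ) 1 := by
    intro x hx
    refine Subgroup.mem_upperCentralSeries_succ_iff.mpr fun y => ?_
    have hxy := Subgroup.mem_upperCentralSeries_succ_iff.mp hx y
    refine (Subgroup.commutatorElement_pow_left_mem_iff hxy _).mpr ?_
    rw [Subgroup.upperCentralSeries_one] at hxy
    obtain ⟨c, hc⟩ := exists_eq_smul_one_of_forall_commute hirr (f := ρ' ⁅x, y⁆) fun h => by
      have := congrArg ρ' (Subgroup.mem_center_iff.mp hxy (h : G ⧸ MonoidHom.ker ρ)).symm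
      rwa [map_mul, map_mul, QuotientGroup.lift_mk] at this
    have hcn : c ^ finrank k V = 1 := by
      simpa [hc, LinearMap.det_smul] using hdet x y
    rw [Subgroup.upperCentralSeries_zero, Subgroup.mem_bot]
    exact hρ' (by rw [map_pow, hc, smul_pow, hcn, one_pow, one_smul])
  obtain ⟨m, hm, hgm⟩ :=
    Subgroup.exists_pow_mem_center finrank_pos.ne' hpow (g : G ⧸ MonoidHom.ker ρ)
  refine ⟨m, hm, ?_⟩
  rw [← Subgroup.upperCentralSeries_one] at hgm
  exact hgm

end Irreducible

theorem exists_pow_mem_relUpperCentralSeries [IsAlgClosed k] [Group.IsNilpotent G]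
    {V : Type*} [AddCommGroup V] [Module k V] [FiniteDimensional k V]
    (ρ : Representation k G V) (g : G) :
    ∃ m ≠ 0, g ^ m ∈ (MonoidHom.ker ρ).relUpperCentralSeries (finrank k V ^ 3) := by
  obtain ⟨n, hn⟩ : ∃ n, finrank k V = n := ⟨_, rfl⟩
  induction n using Nat.strong_induction_on generalizing V with
  | _ n ih =>
  rcases subsingleton_or_nontrivial V with hV | hV
  · exact ⟨1, one_ne_zero, Subgroup.relUpperCentralSeries_mono (Nat.zero_le _)
      (by simpa using Subsingleton.elim (ρ g) 1)⟩
  have hn₀ : n ≠ 0 := hn ▸ finrank_pos.ne'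
  by_cases hirr : ∀ p : Submodule k V, (∀ g, p ≤ p.comap (ρ g)) → p = ⊥ ∨ p = ⊤
  · obtain ⟨m, hm, hgm⟩ := exists_pow_mem_relUpperCentralSeries_one hirr g
    exact ⟨m, hm, Subgroup.relUpperCentralSeries_mono
      (hn ▸ Nat.one_le_pow _ _ (Nat.pos_of_ne_zero hn₀)) hgm⟩
  push Not at hirr
  obtain ⟨p, hp, hp₀, hp₁⟩ := hirr
  have h₁ : finrank k p < n := hn ▸ Submodule.finrank_lt hp₁
  have h₂ : finrank k (V ⧸ p) < n := by
    have := Submodule.finrank_quotient_add_finrank p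
    have : Nontrivial p := Submodule.nontrivial_iff_ne_bot.mpr hp₀
    have := finrank_pos (R := k) (M := p)
    omega
  obtain ⟨m₁, hm₁, hg₁⟩ := ih _ h₁ (ρ.subrepresentation p hp) rfl
  obtain ⟨m₂, hm₂, hg₂⟩ := ih _ h₂ (ρ.quotient p hp) rfl
  have hmem {N : Subgroup G} [N.Normal] {i : ℕ} (hi : i < n) {m : ℕ} (m' : ℕ)
      (h : g ^ m ∈ N.relUpperCentralSeries (i ^ 3)) :
      g ^ (m * m') ∈ N.relUpperCentralSeries ((n - 1) ^ 3) :=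
    pow_mul g m m' ▸ Subgroup.pow_mem _
      (Subgroup.relUpperCentralSeries_mono (Nat.pow_le_pow_left (by omega) 3) h) m'
  have hK : g ^ (m₁ * m₂) ∈ (ρ.flagKernel p hp).relUpperCentralSeries ((n - 1) ^ 3) :=
    Subgroup.inf_relUpperCentralSeries_le _ _ _
      ⟨hmem h₁ m₂ hg₁, mul_comm m₁ m₂ ▸ hmem h₂ m₁ hg₂⟩
  have hle : (n - 1) ^ 3 + finrank k V ^ 2 ≤ finrank k V ^ 3 := by
    obtain ⟨t, rfl⟩ := Nat.exists_eq_add_one_of_ne_zero hn₀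
    rw [hn, Nat.add_sub_cancel]
    nlinarith
  exact ⟨m₁ * m₂, mul_ne_zero hm₁ hm₂, Subgroup.relUpperCentralSeries_mono hle
    (Subgroup.relUpperCentralSeries_le_add (flagKernel_le_relUpperCentralSeries ρ p hp) _ hK)⟩

end Representation

theorem Group.nilpotencyClass_le_of_ker_eq_bot {k G V : Type*} [Field k] [IsAlgClosed k]
    [Group G] [Group.IsNilpotent G] [AddCommGroup V] [Module k V] [FiniteDimensional k V]
    (htf : Monoid.IsTorsionFree G) (ρ : Representation k G V) (hρ : MonoidHom.ker ρ = ⊥) :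
    Group.nilpotencyClass G ≤ finrank k V ^ 3 := by
  refine Subgroup.upperCentralSeries_eq_top_iff_nilpotencyClass_le.mp <|
    eq_top_iff.mpr fun g _ => ?_
  obtain ⟨m, hm, hgm⟩ := ρ.exists_pow_mem_relUpperCentralSeries g
  rw [Subgroup.relUpperCentralSeries_of_eq_bot hρ] at hgm
  exact Subgroup.mem_upperCentralSeries_of_pow_mem htf hm hgm

theorem Group.nilpotencyClass_le_of_injective {G F : Type*} [Group G] [Group.IsNilpotent G]
    [Field F] {d : ℕ} (htf : Monoid.IsTorsionFree G) (φ : G →* Matrix.GeneralLinearGroup (Fin d) F)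
    (hφ : Function.Injective φ) : Group.nilpotencyClass G ≤ d ^ 3 := by
  let E := AlgebraicClosure F
  let ρ : Representation E G (Fin d → E) := (Units.coeHom _).comp
    (Matrix.GeneralLinearGroup.toLin.toMonoidHom.comp
      ((Matrix.GeneralLinearGroup.map (algebraMap F E)).comp φ))
  have hmap : Function.Injective (Matrix.GeneralLinearGroup.map (n := Fin d) (algebraMap F E)) :=
    Units.map_injective (Matrix.map_injective (algebraMap F E).injective)
  have hρ : MonoidHom.ker ρ = ⊥ := (MonoidHom.ker_eq_bot_iff ρ).mpr <|
    Units.val_injective.comp (Matrix.GeneralLinearGroup.toLin.injective.comp (hmap.comp hφ))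
  simpa using nilpotencyClass_le_of_ker_eq_bot htf ρ hρ

theorem statement12 (G : Type*) [Group G]
    (h : ∀ n : ℕ, ∃ H : Subgroup G, Monoid.IsTorsionFree H ∧
      ∃ hN : Group.IsNilpotent H, @Group.nilpotencyClass H _ = n)
    (F : Type*) [Field F] (d : ℕ) :
    ¬∃ φ : G →* Matrix.GeneralLinearGroup (Fin d) F, Function.Injective φ := by
  rintro ⟨φ, hφ⟩
  obtain ⟨H, htf, _, hclass⟩ := h (d ^ 3 + 1)
  have := Group.nilpotencyClass_le_of_injective htf (φ.comp H.subtype)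
    (hφ.comp H.subtype_injective)
  omega
end

section
/- Let F be a field of positive characteristic p > 0 and d a natural number. Then every torsion-free nilpotent subgroup of GL_d(F) is abelian (in fact every torsion-free nilpotent group admitting an injective homomorphism into GL_d(F) is abelian). -/
/-!
In a nilpotent group that is not abelian some commutator `c = ⁅x, y⁆` is central and nontrivial,
so `x y x⁻¹ = c y` with `c` commuting with `x` and `y`. Represent the group over an algebraically
closed field of characteristic `p`. Then `x` and `y` preserve every eigenspace `E` of `c`, and on
`E` the relation reads `x y x⁻¹ = μ y`; taking determinants gives `μ ^ dim E = 1`. So every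
eigenvalue of `c` is a root of unity of order dividing `(dim V)!`, a power of `c` is unipotent, and
a unipotent `u` in characteristic `p` satisfies `u ^ p ^ k = 1`. Thus `c` has finite order.
-/

open Module
open scoped commutatorElement

theorem Group.exists_commutatorElement_mem_center_ne_one {G : Type*} [Group G]
    [Group.IsNilpotent G] (h : ¬ ∀ a b : G, a * b = b * a) :
    ∃ x y : G, ⁅x, y⁆ ∈ Subgroup.center G ∧ ⁅x, y⁆ ≠ 1 := by
  by_contra! hcentral
  have hZ₂ : Subgroup.upperCentralSeries G 1 = Subgroup.upperCentralSeries G 2 := by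
    refine le_antisymm (Subgroup.upperCentralSeries_mono _ one_le_two) fun x hx ↦ ?_
    rw [Subgroup.upperCentralSeries_one, Subgroup.mem_center_iff]
    rw [Subgroup.mem_upperCentralSeries_succ_iff, Subgroup.upperCentralSeries_one] at hx
    exact fun y ↦ (commutatorElement_eq_one_iff_commute.mp (hcentral x y (hx y))).symm
  have htop := Subgroup.upperCentralSeries.eq_top (by decide) hZ₂
  rw [Subgroup.upperCentralSeries_one] at htop
  exact h fun a b ↦ Subgroup.mem_center_iff.mp (htop ▸ Subgroup.mem_top b) a

namespace Module.End

variable {K V : Type*} [Field K] [AddCommGroup V] [Module K V] [FiniteDimensional K V]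

theorem pow_finrank_eq_one_of_mul_eq_smul_mul {x y : End K V} (hx : Function.Injective x)
    (hy : Function.Injective y) {μ : K} (h : x * y = μ • (y * x)) : μ ^ finrank K V = 1 := by
  have hdet : LinearMap.det (x * y) ≠ 0 :=
    (LinearMap.isUnit_det _ ((LinearMap.isUnit_iff_ker_eq_bot _).mpr
      (LinearMap.ker_eq_bot.mpr (show Function.Injective ⇑(x * y) from hx.comp hy)))).ne_zero
  have := congrArg LinearMap.det h
  rw [LinearMap.det_smul, map_mul, map_mul, mul_comm (LinearMap.det y)] at this
  rw [map_mul] at hdet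
  exact (mul_eq_right₀ hdet).mp this.symm

theorem pow_finrank_eigenspace_eq_one {x y z : End K V} (hx : Function.Injective x)
    (hy : Function.Injective y) (hzx : Commute z x) (hzy : Commute z y) (h : x * y = z * y * x)
    (μ : K) : μ ^ finrank K (z.eigenspace μ) = 1 := by
  have hxE := mapsTo_genEigenspace_of_comm hzx μ 1
  have hyE := mapsTo_genEigenspace_of_comm hzy μ 1
  refine pow_finrank_eq_one_of_mul_eq_smul_mul (x := x.restrict hxE) (y := y.restrict hyE)
    (fun _ _ hab ↦ Subtype.ext (hx (congrArg Subtype.val hab)))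
    (fun _ _ hab ↦ Subtype.ext (hy (congrArg Subtype.val hab))) ?_
  ext ⟨v, hv⟩
  have hyxv : y (x v) ∈ z.eigenspace μ := hyE (hxE hv)
  calc x (y v) = z (y (x v)) := by rw [← mul_apply, h]; rfl
    _ = μ • y (x v) := mem_eigenspace_iff.mp hyxv

open Polynomial in
theorem isNilpotent_sub_algebraMap_of_hasEigenvalue [IsAlgClosed K] (f : End K V) (μ : K)
    (h : ∀ ν, f.HasEigenvalue ν → ν = μ) : IsNilpotent (f - algebraMap K (End K V) μ) := by
  have hroots : (minpoly K f).roots = Multiset.replicate (minpoly K f).roots.card μ :=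
    Multiset.eq_replicate.mpr ⟨rfl, fun ν hν ↦ h ν
      (hasEigenvalue_of_isRoot (mem_roots'.mp hν).2)⟩
  have hminpoly : minpoly K f = (X - C μ) ^ (minpoly K f).roots.card := by
    conv_lhs => rw [(IsAlgClosed.splits _).eq_prod_roots_of_monic (minpoly.monic
      (Algebra.IsIntegral.isIntegral f)), hroots]
    rw [Multiset.map_replicate, Multiset.prod_replicate]
  refine ⟨(minpoly K f).roots.card, ?_⟩
  have := minpoly.aeval K f
  rwa [hminpoly, map_pow, map_sub, aeval_X, aeval_C] at this

end Module.End

theorem isOfFinOrder_of_isNilpotent_sub_one {K A : Type*} [Field K] [Ring A] [Algebra K A]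
    (p : ℕ) [Fact p.Prime] [CharP K p] {a : A} (ha : IsNilpotent (a - 1)) : IsOfFinOrder a := by
  rcases subsingleton_or_nontrivial A with hA | hA
  · exact Subsingleton.elim a 1 ▸ IsOfFinOrder.one
  have : CharP A p := charP_of_injective_algebraMap (algebraMap K A).injective p
  obtain ⟨n, hn⟩ := ha
  have hp := (Fact.out : p.Prime)
  have : (a - 1) ^ p ^ n = 0 := pow_eq_zero_of_le (Nat.lt_pow_self hp.one_lt).le hn
  rw [sub_pow_char_pow_of_commute _ _ (Commute.one_right a), one_pow, sub_eq_zero] at this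
  exact isOfFinOrder_iff_pow_eq_one.mpr ⟨p ^ n, pow_pos hp.pos n, this⟩

namespace LinearMap.GeneralLinearGroup

variable {K V : Type*} [Field K] [AddCommGroup V] [Module K V] [FiniteDimensional K V]

theorem isOfFinOrder_of_mul_eq_mul_mul [IsAlgClosed K] (p : ℕ) [Fact p.Prime] [CharP K p]
    {x y z : GeneralLinearGroup K V} (hzx : Commute z x) (hzy : Commute z y)
    (h : x * y = z * y * x) : IsOfFinOrder z := by
  set N := (finrank K V).factorial
  have hroot : ∀ μ ∈ spectrum K (z : End K V), μ ^ N = 1 := by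
    intro μ hμ
    have hE := End.hasEigenvalue_iff_mem_spectrum.mpr hμ
    obtain ⟨c, hc⟩ : finrank K (End.eigenspace (z : End K V) μ) ∣ N :=
      Nat.dvd_factorial (Submodule.one_le_finrank_iff.mpr hE) (Submodule.finrank_le _)
    rw [hc, pow_mul, End.pow_finrank_eigenspace_eq_one (toLinearEquiv x).injective
      (toLinearEquiv y).injective (Units.ext_iff.mp hzx) (Units.ext_iff.mp hzy)
      (Units.ext_iff.mp h) μ, one_pow]
  have hunipotent : ∀ ν, End.HasEigenvalue ((z ^ N : GeneralLinearGroup K V) : End K V) ν →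
      ν = 1 := by
    intro ν hν
    rw [End.hasEigenvalue_iff_mem_spectrum, Units.val_pow_eq_pow_val,
      spectrum.map_pow_of_pos _ (Nat.factorial_pos _)] at hν
    obtain ⟨μ, hμ, rfl⟩ := hν
    exact hroot μ hμ
  have hfin := isOfFinOrder_of_isNilpotent_sub_one (K := K) p
    (map_one (algebraMap K (End K V)) ▸
      End.isNilpotent_sub_algebraMap_of_hasEigenvalue _ 1 hunipotent)
  exact (Units.isOfFinOrder_val.mp hfin).of_pow (Nat.factorial_ne_zero _)

theorem mul_comm_of_injective [IsAlgClosed K] (p : ℕ) [Fact p.Prime] [CharP K p] {G : Type*}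
    [Group G] [Group.IsNilpotent G] (htf : Monoid.IsTorsionFree G)
    {φ : G →* GeneralLinearGroup K V} (hφ : Function.Injective φ) (a b : G) :
    a * b = b * a := by
  revert a b
  by_contra hcomm
  obtain ⟨x, y, hcenter, hne⟩ := Group.exists_commutatorElement_mem_center_ne_one hcomm
  have hrel : x * y = ⁅x, y⁆ * y * x := by rw [commutatorElement_def]; group
  have hfin : IsOfFinOrder (φ ⁅x, y⁆) := isOfFinOrder_of_mul_eq_mul_mul p
    (Commute.map (Subgroup.mem_center_iff.mp hcenter x).symm φ)
    (Commute.map (Subgroup.mem_center_iff.mp hcenter y).symm φ)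
    (by simpa only [map_mul] using congrArg φ hrel)
  exact htf _ hne (hφ.isOfFinOrder_iff.mp hfin)

end LinearMap.GeneralLinearGroup

theorem Matrix.GeneralLinearGroup.map_injective {n R S : Type*} [Fintype n] [DecidableEq n]
    [CommRing R] [CommRing S] {f : R →+* S} (hf : Function.Injective f) :
    Function.Injective (map (n := n) f) :=
  fun _ _ h ↦ Units.ext (Matrix.map_injective hf (congrArg Units.val h))

theorem Matrix.GeneralLinearGroup.mul_comm_of_injective {n F G : Type*} [Fintype n]
    [DecidableEq n] [Field F] (p : ℕ) [Fact p.Prime] [CharP F p] [Group G] [Group.IsNilpotent G]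
    (htf : Monoid.IsTorsionFree G) {φ : G →* GL n F} (hφ : Function.Injective φ) (a b : G) :
    a * b = b * a :=
  LinearMap.GeneralLinearGroup.mul_comm_of_injective (K := AlgebraicClosure F) p htf
    (φ := (toLin.toMonoidHom.comp (map (algebraMap F (AlgebraicClosure F)))).comp φ)
    ((toLin.injective.comp (map_injective (algebraMap F _).injective)).comp hφ) a b

theorem statement14 (F : Type*) [Field F] (p : ℕ) (hp : 0 < p) [CharP F p] (d : ℕ) :
    (∀ H : Subgroup (Matrix.GeneralLinearGroup (Fin d) F),
      Monoid.IsTorsionFree H → Group.IsNilpotent H → ∀ a b : H, a * b = b * a) ∧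
    (∀ (G : Type*) [Group G], Monoid.IsTorsionFree G → Group.IsNilpotent G →
      (∃ φ : G →* Matrix.GeneralLinearGroup (Fin d) F, Function.Injective φ) →
      ∀ a b : G, a * b = b * a) := by
  have : NeZero p := ⟨hp.ne'⟩
  have : Fact p.Prime := CharP.char_is_prime_of_pos F p
  exact ⟨fun H htf _ ↦
      Matrix.GeneralLinearGroup.mul_comm_of_injective p htf H.subtype_injective,
    fun G _ htf _ ⟨_, hφ⟩ ↦ Matrix.GeneralLinearGroup.mul_comm_of_injective p htf hφ⟩
end

section
/- Let E be the group of elementary polynomial automorphisms of ℂ², i.e. the subgroup of ℂ-algebra automorphisms g of ℂ[x,y] = MvPolynomial (Fin 2) ℂ for which there exist α, β ∈ ℂ*, c ∈ ℂ, and a polynomial P ∈ ℂ[T] such that g(x) = α·x + P(y) and g(y) = β·y + c. Then every finitely generated subgroup Γ of E is linear over ℂ: there exist a natural number d and an injective group homomorphism from Γ into GL_d(ℂ). -/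
/-!
An elementary automorphism `x ↦ αx + P(y), y ↦ βy + c` with `deg P ≤ N` maps the
finite-dimensional space spanned by `x, 1, y, …, y^N` into itself. The finitely many generators
of `Γ` have bounded degree, so `Γ` preserves such a space, and it acts faithfully on it because
an automorphism of `ℂ[x,y]` is determined by the images of `x` and `y`.
-/

open MvPolynomial Pointwise

section LinearRepresentation

variable {K G M : Type*} [Field K] [Group G] [AddCommGroup M] [Module K M]

theorem Representation.exists_injective_hom_generalLinearGroup {V : Type*} [AddCommGroup V]
    [Module K V] [FiniteDimensional K V] (ρ : Representation K G V)
    (hρ : Function.Injective ρ) :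
    ∃ (d : ℕ) (φ : G →* Matrix.GeneralLinearGroup (Fin d) K), Function.Injective φ := by
  let e := LinearMap.GeneralLinearGroup.congrLinearEquiv (Module.finBasis K V).equivFun
  refine ⟨_, (Matrix.GeneralLinearGroup.toLin.symm.toMonoidHom.comp e.toMonoidHom).comp
    ρ.toHomUnits, ?_⟩
  exact Matrix.GeneralLinearGroup.toLin.symm.injective.comp <| e.injective.comp
    fun g h hgh => hρ (congrArg Units.val hgh)

variable [DistribMulAction G M] [SMulCommClass G K M]
  (V : Submodule K M) [FiniteDimensional K V]

/-- In finite dimension `g • V ≤ V` forces `g • V = V`, so inverses of the generators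
preserve `V` as well. -/
theorem Subgroup.closure_le_stabilizer_of_forall_smul_mem {s : Set G}
    (hs : ∀ g ∈ s, ∀ v ∈ V, g • v ∈ V) :
    Subgroup.closure s ≤ MulAction.stabilizer G V := by
  refine (Subgroup.closure_le _).2 fun g hg => Submodule.eq_of_le_of_finrank_eq ?_
    ((DistribMulAction.toLinearEquiv K M g).finrank_map_eq V)
  rintro _ ⟨v, hv, rfl⟩
  exact hs g hg v hv

theorem Subgroup.exists_injective_hom_generalLinearGroup_of_le_stabilizer (H : Subgroup G)
    (hH : H ≤ MulAction.stabilizer G V)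
    (hfaithful : ∀ g ∈ H, (∀ v ∈ V, g • v = v) → g = 1) :
    ∃ (d : ℕ) (φ : H →* Matrix.GeneralLinearGroup (Fin d) K), Function.Injective φ := by
  have hV (g : H) : V ≤ V.comap (Representation.ofDistribMulAction K H M g) := by
    intro v hv
    rw [← hH g.2]
    exact Submodule.smul_mem_pointwise_smul v (g : G) V hv
  refine ((Representation.ofDistribMulAction K H M).subrepresentation V hV
    ).exists_injective_hom_generalLinearGroup <| (injective_iff_map_eq_one _).2 fun g hg => ?_
  refine Subtype.ext <| hfaithful g g.2 fun v hv => ?_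
  exact congrArg Subtype.val (LinearMap.congr_fun hg ⟨v, hv⟩)

end LinearRepresentation

section ElementarySpan

variable (R : Type*) [CommSemiring R] (N : ℕ)

noncomputable def elementarySpan : Submodule R (MvPolynomial (Fin 2) R) :=
  (R ∙ X 0) ⊔ (Polynomial.degreeLE R N).map (Polynomial.aeval (X 1)).toLinearMap

instance {K : Type*} [Field K] : FiniteDimensional K (elementarySpan K N) := by
  rw [elementarySpan, ← Polynomial.degreeLT_succ_eq_degreeLE]; infer_instance

variable {R N}

theorem X_zero_mem_elementarySpan : X 0 ∈ elementarySpan R N :=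
  Submodule.mem_sup_left (Submodule.mem_span_singleton_self _)

theorem aeval_X_one_mem_elementarySpan {P : Polynomial R} (hP : P.natDegree ≤ N) :
    Polynomial.aeval (X 1) P ∈ elementarySpan R N :=
  Submodule.mem_sup_right
    ⟨P, Polynomial.mem_degreeLE.2 (Polynomial.natDegree_le_iff_degree_le.1 hP), rfl⟩

theorem X_one_mem_elementarySpan [Nontrivial R] (hN : 1 ≤ N) : X 1 ∈ elementarySpan R N := by
  simpa using aeval_X_one_mem_elementarySpan (R := R) (Polynomial.natDegree_X.trans_le hN)

theorem map_mem_elementarySpan {F : Type*}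
    [FunLike F (MvPolynomial (Fin 2) R) (MvPolynomial (Fin 2) R)]
    [AlgHomClass F R (MvPolynomial (Fin 2) R) (MvPolynomial (Fin 2) R)] {g : F}
    {α β c : R} {P : Polynomial R} (hP : P.natDegree ≤ N)
    (h0 : g (X 0) = C α * X 0 + Polynomial.aeval (X 1) P) (h1 : g (X 1) = C β * X 1 + C c)
    {v : MvPolynomial (Fin 2) R} (hv : v ∈ elementarySpan R N) : g v ∈ elementarySpan R N := by
  suffices elementarySpan R N ≤ (elementarySpan R N).comap (AlgHomClass.toAlgHom g).toLinearMap
    from this hv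
  refine sup_le ((Submodule.span_singleton_le_iff_mem _ _).2 ?_)
    (Submodule.map_le_iff_le_comap.2 fun p hp => ?_)
  · change g (X 0) ∈ elementarySpan R N
    rw [h0, ← smul_eq_C_mul]
    exact add_mem (Submodule.smul_mem _ _ X_zero_mem_elementarySpan)
      (aeval_X_one_mem_elementarySpan hP)
  · let q := Polynomial.C β * Polynomial.X + Polynomial.C c
    have hg : g (Polynomial.aeval (X 1) p) = Polynomial.aeval (X 1) (p.comp q) := by
      simp [q, ← Polynomial.aeval_algHom_apply, Polynomial.aeval_comp, h1]
    change g (Polynomial.aeval (X 1) p) ∈ elementarySpan R N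
    rw [hg]
    refine aeval_X_one_mem_elementarySpan (Polynomial.natDegree_comp_le.trans ?_)
    calc p.natDegree * q.natDegree ≤ N * 1 := Nat.mul_le_mul
          (Polynomial.natDegree_le_iff_degree_le.2 (Polynomial.mem_degreeLE.1 hp))
          Polynomial.natDegree_linear_le
      _ = N := mul_one N

end ElementarySpan

theorem MvPolynomial.algEquiv_eq_one_of_forall_X_eq {σ R : Type*} [CommSemiring R]
    {g : MvPolynomial σ R ≃ₐ[R] MvPolynomial σ R} (hg : ∀ i, g (X i) = X i) : g = 1 :=
  AlgEquiv.coe_toAlgHom_injective (algHom_ext hg)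

theorem statement19
    (Γ : Subgroup (MvPolynomial (Fin 2) ℂ ≃ₐ[ℂ] MvPolynomial (Fin 2) ℂ))
    (hΓ : ∀ g ∈ Γ, ∃ (α β c : ℂ) (P : Polynomial ℂ), α ≠ 0 ∧ β ≠ 0 ∧
      g (X 0) = C α * X 0 + Polynomial.aeval (X 1 : MvPolynomial (Fin 2) ℂ) P ∧
      g (X 1) = C β * X 1 + C c)
    (hfg : Group.FG Γ) :
    ∃ (d : ℕ) (φ : Γ →* Matrix.GeneralLinearGroup (Fin d) ℂ), Function.Injective φ := by
  obtain ⟨S, rfl⟩ := (Group.fg_iff_subgroup_fg Γ).mp hfg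
  choose! _ _ _ P _ _ h0 h1 using
    fun g (hg : g ∈ (S : Set _)) => hΓ g (Subgroup.subset_closure hg)
  let N := S.sup (fun g => (P g).natDegree) ⊔ 1
  have hstab : Subgroup.closure ↑S ≤ MulAction.stabilizer _ (elementarySpan ℂ N) :=
    Subgroup.closure_le_stabilizer_of_forall_smul_mem _ fun g hg _ =>
      map_mem_elementarySpan
        ((Finset.le_sup (f := fun g => (P g).natDegree) hg).trans le_sup_left) (h0 g hg) (h1 g hg)
  refine Subgroup.exists_injective_hom_generalLinearGroup_of_le_stabilizer _ _ hstab
    fun g _ hg => algEquiv_eq_one_of_forall_X_eq fun i => ?_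
  fin_cases i
  · exact hg _ X_zero_mem_elementarySpan
  · exact hg _ (X_one_mem_elementarySpan le_sup_right)
end
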